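/- arXiv:1712.08672 — 8 statements merged into one kernel-verified Lean document; each statement's English description precedes it below -/
import Mathlib

section
/- Let Q, a, b : ℕ → ℝ satisfy Q(t+1) = max(Q(t) + a(t) − b(t), 0) with a(τ) ≥ 0 and b(τ) ≥ 0 for all τ, and suppose Q(t) ≥ 0. Then for every window size W ∈ ℕ, Q(t+W)² ≤ (Q(t) + Σ_{τ=t}^{t+W−1} a(τ) − Σ_{τ=t}^{t+W−1} b(τ))² + (Σ_{τ=t}^{t+W−1} a(τ) + Σ_{τ=t}^{t+W−1} b(τ))². -/
/-- Squared-queue window bound: the key case-analysis step in the proof of the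
`W`-slot drift lemma for the Lindley recursion. -/
theorem queue_sq_window_bound (Q a b : ℕ → ℝ)
    (hrec : ∀ τ, Q (τ + 1) = max (Q τ + a τ - b τ) 0)
    (ha : ∀ τ, 0 ≤ a τ) (hb : ∀ τ, 0 ≤ b τ)
    (t : ℕ) (hQt : 0 ≤ Q t) (W : ℕ) :
    (Q (t + W)) ^ 2 ≤
      (Q t + (∑ τ ∈ Finset.Ico t (t + W), a τ) - (∑ τ ∈ Finset.Ico t (t + W), b τ)) ^ 2
      + ((∑ τ ∈ Finset.Ico t (t + W), a τ) + (∑ τ ∈ Finset.Ico t (t + W), b τ)) ^ 2 := by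
  -- nonnegativity of Q(t+W)
  have hQnn : ∀ W, 0 ≤ Q (t + W) := by
    intro W
    cases W with
    | zero => simpa using hQt
    | succ n =>
      have : Q (t + (n + 1)) = max (Q (t + n) + a (t + n) - b (t + n)) 0 := by
        rw [← hrec (t + n)]; ring_nf
      rw [this]; exact le_max_right _ _
  -- upper bound by max
  have hub : ∀ W, Q (t + W) ≤
      max (Q t + (∑ τ ∈ Finset.Ico t (t + W), a τ) - (∑ τ ∈ Finset.Ico t (t + W), b τ))
          (∑ τ ∈ Finset.Ico t (t + W), a τ) := by
    intro W
    induction W with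
    | zero => simp
    | succ n ih =>
      have hsa : (∑ τ ∈ Finset.Ico t (t + (n + 1)), a τ) =
          (∑ τ ∈ Finset.Ico t (t + n), a τ) + a (t + n) := by
        rw [show t + (n + 1) = (t + n) + 1 by ring, Finset.sum_Ico_succ_top (by omega)]
      have hsb : (∑ τ ∈ Finset.Ico t (t + (n + 1)), b τ) =
          (∑ τ ∈ Finset.Ico t (t + n), b τ) + b (t + n) := by
        rw [show t + (n + 1) = (t + n) + 1 by ring, Finset.sum_Ico_succ_top (by omega)]
      have hQ : Q (t + (n + 1)) = max (Q (t + n) + a (t + n) - b (t + n)) 0 := by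
        rw [← hrec (t + n)]; ring_nf
      rw [hQ, hsa, hsb]
      set A := ∑ τ ∈ Finset.Ico t (t + n), a τ
      set B := ∑ τ ∈ Finset.Ico t (t + n), b τ
      have hAnn : 0 ≤ A := Finset.sum_nonneg fun i _ => ha i
      rcases le_or_gt (Q t + A - B) A with h | h
      · have h1 : Q (t + n) ≤ A := le_trans ih (by simp [h])
        apply max_le
        · have : Q (t + n) + a (t + n) - b (t + n) ≤ A + a (t + n) := by
            have := hb (t + n); linarith
          exact le_trans this (le_max_right _ _)
        · have hA' : (0:ℝ) ≤ A + a (t + n) := by have := ha (t+n); linarith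
          exact le_trans hA' (le_max_right _ _)
      · have h1 : Q (t + n) ≤ Q t + A - B := le_trans ih (by simp [le_of_lt h])
        apply max_le
        · have : Q (t + n) + a (t + n) - b (t + n) ≤ Q t + (A + a (t+n)) - (B + b (t+n)) := by
            linarith
          exact le_trans this (le_max_left _ _)
        · have hA' : (0:ℝ) ≤ A + a (t + n) := by have := ha (t+n); linarith
          exact le_trans hA' (le_max_right _ _)
  -- lower bound
  have hlb : ∀ W, Q t + (∑ τ ∈ Finset.Ico t (t + W), a τ) - (∑ τ ∈ Finset.Ico t (t + W), b τ)
      ≤ Q (t + W) := by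
    intro W
    induction W with
    | zero => simp
    | succ n ih =>
      have hsa : (∑ τ ∈ Finset.Ico t (t + (n + 1)), a τ) =
          (∑ τ ∈ Finset.Ico t (t + n), a τ) + a (t + n) := by
        rw [show t + (n + 1) = (t + n) + 1 by ring, Finset.sum_Ico_succ_top (by omega)]
      have hsb : (∑ τ ∈ Finset.Ico t (t + (n + 1)), b τ) =
          (∑ τ ∈ Finset.Ico t (t + n), b τ) + b (t + n) := by
        rw [show t + (n + 1) = (t + n) + 1 by ring, Finset.sum_Ico_succ_top (by omega)]
      have hQ : Q (t + (n + 1)) = max (Q (t + n) + a (t + n) - b (t + n)) 0 := by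
        rw [← hrec (t + n)]; ring_nf
      rw [hQ, hsa, hsb]
      have : Q t + (∑ τ ∈ Finset.Ico t (t + n), a τ) + a (t+n)
          - ((∑ τ ∈ Finset.Ico t (t + n), b τ) + b (t+n))
          ≤ Q (t + n) + a (t + n) - b (t + n) := by linarith
      exact le_trans (by linarith) (le_max_left _ _)
  set A := ∑ τ ∈ Finset.Ico t (t + W), a τ
  set B := ∑ τ ∈ Finset.Ico t (t + W), b τ
  have hAnn : 0 ≤ A := Finset.sum_nonneg fun i _ => ha i
  have hBnn : 0 ≤ B := Finset.sum_nonneg fun i _ => hb i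
  have hm := hQnn W
  rcases max_cases (Q t + A - B) A with ⟨heq, _⟩ | ⟨heq, _⟩
  · have h1 : Q (t + W) ≤ Q t + A - B := by have := hub W; rw [heq] at this; exact this
    have : Q (t + W) ^ 2 ≤ (Q t + A - B) ^ 2 := by nlinarith
    nlinarith [sq_nonneg (A + B)]
  · have h1 : Q (t + W) ≤ A := by have := hub W; rw [heq] at this; exact this
    have hA : A ≤ A + B := by linarith
    have : Q (t + W) ^ 2 ≤ (A + B) ^ 2 := by nlinarith
    nlinarith [sq_nonneg (Q t + A - B)]
end

section
/- Let N ≥ 1, B ≥ 0, and for each i ∈ {1,…,N} let Q_i, a_i, b_i : ℕ → ℝ satisfy Q_i(0) ≥ 0, Q_i(t+1) = max(Q_i(t) + a_i(t) − b_i(t), 0), and 0 ≤ a_i(t) ≤ B, 0 ≤ b_i(t) ≤ B for all t. Define the potential Φ(t) = (1/2) Σ_{i=1}^N Q_i(t)². Then for every t ∈ ℕ and every window size W ∈ ℕ, the W-slot drift satisfies Φ(t+W) − Φ(t) ≤ Σ_{τ=t}^{t+W−1} Σ_{i=1}^N Q_i(τ) (a_i(τ) − b_i(τ)) + 5·N·B²·W².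 -/
open Finset

lemma one_slot_drift {B Qv av bv : ℝ} (hB : 0 ≤ B)
    (hab : 0 ≤ av ∧ av ≤ B ∧ 0 ≤ bv ∧ bv ≤ B) :
    (1 / 2) * (max (Qv + av - bv) 0) ^ 2 ≤
      (1 / 2) * Qv ^ 2 + Qv * (av - bv) + (1 / 2) * B ^ 2 := by
  obtain ⟨h1, h2, h3, h4⟩ := hab
  have hm : (max (Qv + av - bv) 0) ^ 2 ≤ (Qv + av - bv) ^ 2 := by
    rcases le_total (Qv + av - bv) 0 with h | h
    · rw [max_eq_right h]; simpa using sq_nonneg (Qv + av - bv)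
    · rw [max_eq_left h]
  nlinarith [sq_nonneg (av - bv), sq_nonneg (av + bv)]

/-- `W`-slot drift bound for the quadratic potential `Φ(t) = (1/2) Σ_i Q_i(t)²`
of a network of `N` queues evolving by the Lindley recursion with arrivals and
services in `[0, B]`. -/
theorem W_slot_drift_bound (N : ℕ) (hN : 1 ≤ N) (B : ℝ) (hB : 0 ≤ B)
    (Q a b : Fin N → ℕ → ℝ)
    (hQ0 : ∀ i, 0 ≤ Q i 0)
    (hrec : ∀ i t, Q i (t + 1) = max (Q i t + a i t - b i t) 0)
    (hab : ∀ i t, 0 ≤ a i t ∧ a i t ≤ B ∧ 0 ≤ b i t ∧ b i t ≤ B)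
    (t W : ℕ) :
    (1 / 2) * (∑ i, (Q i (t + W)) ^ 2) - (1 / 2) * (∑ i, (Q i t) ^ 2) ≤
      (∑ τ ∈ Finset.Ico t (t + W), ∑ i, Q i τ * (a i τ - b i τ))
        + 5 * (N : ℝ) * B ^ 2 * (W : ℝ) ^ 2 := by
  have main : ∀ W : ℕ,
      (1 / 2) * (∑ i, (Q i (t + W)) ^ 2) - (1 / 2) * (∑ i, (Q i t) ^ 2) ≤
        (∑ τ ∈ Finset.Ico t (t + W), ∑ i, Q i τ * (a i τ - b i τ))
          + (1 / 2) * (N : ℝ) * B ^ 2 * (W : ℝ) := by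
    intro W
    induction W with
    | zero => simp
    | succ w ih =>
      have step : (1 / 2) * (∑ i, (Q i (t + w + 1)) ^ 2) ≤
          (1 / 2) * (∑ i, (Q i (t + w)) ^ 2)
            + (∑ i, Q i (t + w) * (a i (t + w) - b i (t + w)))
            + (1 / 2) * (N : ℝ) * B ^ 2 := by
        have : ∀ i : Fin N, (1 / 2) * (Q i (t + w + 1)) ^ 2 ≤
            (1 / 2) * (Q i (t + w)) ^ 2
              + Q i (t + w) * (a i (t + w) - b i (t + w)) + (1 / 2) * B ^ 2 := by
          intro i
          rw [hrec i (t + w)]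
          exact one_slot_drift hB (hab i (t + w))
        calc (1 / 2) * (∑ i, (Q i (t + w + 1)) ^ 2)
            = ∑ i, (1 / 2) * (Q i (t + w + 1)) ^ 2 := by rw [Finset.mul_sum]
          _ ≤ ∑ i, ((1 / 2) * (Q i (t + w)) ^ 2
                + Q i (t + w) * (a i (t + w) - b i (t + w)) + (1 / 2) * B ^ 2) :=
              Finset.sum_le_sum fun i _ => this i
          _ = (1 / 2) * (∑ i, (Q i (t + w)) ^ 2)
                + (∑ i, Q i (t + w) * (a i (t + w) - b i (t + w)))
                + (1 / 2) * (N : ℝ) * B ^ 2 := by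
              simp [Finset.sum_add_distrib, Finset.mul_sum]; ring
      rw [show t + (w + 1) = (t + w) + 1 from by ring,
        Finset.sum_Ico_succ_top (Nat.le_add_right t w)]
      push_cast
      nlinarith [ih, step]
  rcases Nat.eq_zero_or_pos W with h | h
  · subst h; simpa using main 0
  · have hW : (1 : ℝ) ≤ (W : ℝ) := by exact_mod_cast h
    have hN' : (1 : ℝ) ≤ (N : ℝ) := by exact_mod_cast hN
    have h2 : (1 / 2) * (N : ℝ) * B ^ 2 * (W : ℝ) ≤ 5 * (N : ℝ) * B ^ 2 * (W : ℝ) ^ 2 := by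
      nlinarith [sq_nonneg B, mul_nonneg (mul_nonneg (le_trans zero_le_one hN') (sq_nonneg B)) (le_trans zero_le_one hW)]
    linarith [main W]
end

section
/- Let N ≥ 1, B ≥ 0, V ≥ 0, and for each i ∈ {1,…,N} let Q_i, a_i, b_i, a*_i, b*_i : ℕ → ℝ satisfy Q_i(0) ≥ 0, Q_i(t+1) = max(Q_i(t) + a_i(t) − b_i(t), 0), and 0 ≤ a_i(t), b_i(t), a*_i(t), b*_i(t) ≤ B for all t. Let U, U* : ℕ → ℝ and suppose the Drift-plus-Penalty property holds: for every slot τ, Σ_{i=1}^N Q_i(τ)(b_i(τ) − a_i(τ)) + V·U(τ) ≥ Σ_{i=1}^N Q_i(τ)(b*_i(τ) − a*_i(τ)) + V·U*(τ). Define Φ(t) = (1/2) Σ_{i=1}^N Q_i(t)². Then for every t ∈ ℕ and every W ∈ ℕ: Φ(t+W) − Φ(t) − V Σ_{τ=t}^{t+W−1} U(τ) ≤ Σ_{i=1}^N Q_i(t) Σ_{τ=t}^{t+W−1} (a*_i(τ) − b*_i(τ)) − V Σ_{τ=t}^{t+W−1} U*(τ) + 7·N·B²·W². -/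
open Finset

/-- General `W`-slot drift-plus-penalty bound for the Drift-plus-Penalty algorithm:
the drift of the quadratic potential minus `V` times the utility gained over the
window is bounded in terms of the comparator's net arrivals and utility. -/
theorem W_slot_drift_plus_penalty_bound (N : ℕ) (hN : 1 ≤ N) (B : ℝ) (hB : 0 ≤ B)
    (V : ℝ) (hV : 0 ≤ V)
    (Q a b astar bstar : Fin N → ℕ → ℝ) (U Ustar : ℕ → ℝ)
    (hQ0 : ∀ i, 0 ≤ Q i 0)
    (hrec : ∀ i t, Q i (t + 1) = max (Q i t + a i t - b i t) 0)
    (hbnd : ∀ i t, (0 ≤ a i t ∧ a i t ≤ B) ∧ (0 ≤ b i t ∧ b i t ≤ B) ∧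
      (0 ≤ astar i t ∧ astar i t ≤ B) ∧ (0 ≤ bstar i t ∧ bstar i t ≤ B))
    (hDPP : ∀ τ, (∑ i, Q i τ * (b i τ - a i τ)) + V * U τ ≥
      (∑ i, Q i τ * (bstar i τ - astar i τ)) + V * Ustar τ)
    (t W : ℕ) :
    (1 / 2) * (∑ i, (Q i (t + W)) ^ 2) - (1 / 2) * (∑ i, (Q i t) ^ 2)
        - V * (∑ τ ∈ Finset.Ico t (t + W), U τ) ≤
      (∑ i, Q i t * (∑ τ ∈ Finset.Ico t (t + W), (astar i τ - bstar i τ)))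
        - V * (∑ τ ∈ Finset.Ico t (t + W), Ustar τ)
        + 7 * (N : ℝ) * B ^ 2 * (W : ℝ) ^ 2 := by
  have hQnn : ∀ i τ, 0 ≤ Q i τ := by
    intro i τ
    induction τ with
    | zero => exact hQ0 i
    | succ n ih => rw [hrec]; exact le_max_right _ _
  have habB : ∀ i τ, |a i τ - b i τ| ≤ B := by
    intro i τ
    obtain ⟨⟨ha0, haB⟩, ⟨hb0, hbB⟩, _⟩ := hbnd i τ
    rw [abs_le]; constructor <;> linarith
  have hsB : ∀ i τ, |astar i τ - bstar i τ| ≤ B := by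
    intro i τ
    obtain ⟨_, _, ⟨ha0, haB⟩, ⟨hb0, hbB⟩⟩ := hbnd i τ
    rw [abs_le]; constructor <;> linarith
  have hstep : ∀ i τ, |Q i (τ + 1) - Q i τ| ≤ B := by
    intro i τ
    have hab := habB i τ
    rw [abs_le] at hab
    have hq := hQnn i τ
    rw [hrec]
    rcases le_or_gt 0 (Q i τ + a i τ - b i τ) with h | h
    · rw [max_eq_left h, abs_le]; constructor <;> linarith
    · rw [max_eq_right h.le, abs_le]; constructor <;> linarith
  have hdev : ∀ i k, |Q i (t + k) - Q i t| ≤ (k : ℝ) * B := by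
    intro i k
    induction k with
    | zero => simp
    | succ n ih =>
      have h1 := hstep i (t + n)
      have h2 := abs_sub_le (Q i (t + n + 1)) (Q i (t + n)) (Q i t)
      have : t + (n + 1) = t + n + 1 := rfl
      rw [this]
      push_cast
      linarith
  -- per slot bound
  have hslot : ∀ τ ∈ Finset.Ico t (t + W),
      (1 / 2) * (∑ i, (Q i (τ + 1)) ^ 2) - (1 / 2) * (∑ i, (Q i τ) ^ 2) - V * U τ ≤
      (∑ i, Q i t * (astar i τ - bstar i τ)) - V * Ustar τ + (N : ℝ) * B ^ 2 * W := by
    intro τ hτ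
    rw [Finset.mem_Ico] at hτ
    obtain ⟨ht1, ht2⟩ := hτ
    obtain ⟨k, hk⟩ := Nat.exists_eq_add_of_le ht1
    have hkW : k < W := by omega
    -- drift bound per queue
    have hdrift : ∀ i : Fin N, (1 / 2) * (Q i (τ + 1)) ^ 2 - (1 / 2) * (Q i τ) ^ 2
        ≤ Q i τ * (a i τ - b i τ) + B ^ 2 / 2 := by
      intro i
      have h1 : (Q i (τ + 1)) ^ 2 ≤ (Q i τ + a i τ - b i τ) ^ 2 := by
        rw [hrec]
        calc (max (Q i τ + a i τ - b i τ) 0) ^ 2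
            ≤ |Q i τ + a i τ - b i τ| ^ 2 :=
              pow_le_pow_left₀ (le_max_right _ _)
                (max_le (le_abs_self _) (abs_nonneg _)) 2
          _ = (Q i τ + a i τ - b i τ) ^ 2 := sq_abs _
      have hab := habB i τ
      rw [abs_le] at hab
      have h3 : (a i τ - b i τ) ^ 2 ≤ B ^ 2 := sq_le_sq' (by linarith) (by linarith)
      nlinarith [h1, h3]
    have hsum1 : (1 / 2) * (∑ i, (Q i (τ + 1)) ^ 2) - (1 / 2) * (∑ i, (Q i τ) ^ 2)
        ≤ (∑ i, Q i τ * (a i τ - b i τ)) + (N : ℝ) * B ^ 2 / 2 := by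
      have := Finset.sum_le_sum (s := (Finset.univ : Finset (Fin N))) (fun i _ => hdrift i)
      simp only [Finset.sum_add_distrib, Finset.sum_sub_distrib, ← Finset.mul_sum,
        Finset.sum_const, Finset.card_univ, Fintype.card_fin, nsmul_eq_mul] at this
      linarith
    -- DPP
    have hdpp := hDPP τ
    have hsum2 : (∑ i, Q i τ * (a i τ - b i τ)) - V * U τ
        ≤ (∑ i, Q i τ * (astar i τ - bstar i τ)) - V * Ustar τ := by
      have e1 : (∑ i, Q i τ * (b i τ - a i τ)) = - ∑ i, Q i τ * (a i τ - b i τ) := by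
        rw [← Finset.sum_neg_distrib]; apply Finset.sum_congr rfl; intro i _; ring
      have e2 : (∑ i, Q i τ * (bstar i τ - astar i τ))
          = - ∑ i, Q i τ * (astar i τ - bstar i τ) := by
        rw [← Finset.sum_neg_distrib]; apply Finset.sum_congr rfl; intro i _; ring
      rw [e1, e2] at hdpp
      linarith
    -- comparator shift
    have hshift : (∑ i, Q i τ * (astar i τ - bstar i τ))
        ≤ (∑ i, Q i t * (astar i τ - bstar i τ)) + (N : ℝ) * ((k : ℝ) * B * B) := by
      have h4 : ∀ i : Fin N, Q i τ * (astar i τ - bstar i τ)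
          ≤ Q i t * (astar i τ - bstar i τ) + (k : ℝ) * B * B := by
        intro i
        have hd : |Q i τ - Q i t| ≤ (k : ℝ) * B := by rw [hk]; exact hdev i k
        have hs := hsB i τ
        have h5 : (Q i τ - Q i t) * (astar i τ - bstar i τ)
            ≤ |Q i τ - Q i t| * |astar i τ - bstar i τ| := by
          calc (Q i τ - Q i t) * (astar i τ - bstar i τ)
              ≤ |(Q i τ - Q i t) * (astar i τ - bstar i τ)| := le_abs_self _
            _ = |Q i τ - Q i t| * |astar i τ - bstar i τ| := abs_mul _ _
        have h6 : |Q i τ - Q i t| * |astar i τ - bstar i τ| ≤ ((k : ℝ) * B) * B := by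
          apply mul_le_mul hd hs (abs_nonneg _)
          positivity
        nlinarith [h5, h6]
      have := Finset.sum_le_sum (s := (Finset.univ : Finset (Fin N))) (fun i _ => h4 i)
      simp only [Finset.sum_add_distrib, Finset.sum_const, Finset.card_univ,
        Fintype.card_fin, nsmul_eq_mul] at this
      linarith
    -- combine constants: N B²/2 + N k B B ≤ N B² W
    have hconst : (N : ℝ) * B ^ 2 / 2 + (N : ℝ) * ((k : ℝ) * B * B) ≤ (N : ℝ) * B ^ 2 * W := by
      have hk' : (k : ℝ) ≤ (W : ℝ) - 1 := by
        have : (k : ℝ) + 1 ≤ (W : ℝ) := by exact_mod_cast hkW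
        linarith
      have hN0 : (0 : ℝ) ≤ N := Nat.cast_nonneg N
      have h1 : B ^ 2 / 2 + (k : ℝ) * B * B ≤ B ^ 2 * W := by
        nlinarith [sq_nonneg B, mul_nonneg (sub_nonneg.mpr hk') (sq_nonneg B)]
      have h2 : (N : ℝ) * (B ^ 2 / 2 + (k : ℝ) * B * B) ≤ (N : ℝ) * (B ^ 2 * W) :=
        mul_le_mul_of_nonneg_left h1 hN0
      nlinarith [h2]
    linarith
  -- telescope
  have htel : (1 / 2) * (∑ i, (Q i (t + W)) ^ 2) - (1 / 2) * (∑ i, (Q i t) ^ 2)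
      = ∑ τ ∈ Finset.Ico t (t + W),
          ((1 / 2) * (∑ i, (Q i (τ + 1)) ^ 2) - (1 / 2) * (∑ i, (Q i τ) ^ 2)) := by
    rw [Finset.sum_Ico_eq_sum_range]
    simp only [Nat.add_sub_cancel_left]
    exact (Finset.sum_range_sub (fun k => (1 / 2) * (∑ i, (Q i (t + k)) ^ 2)) W).symm
  have hmain : (1 / 2) * (∑ i, (Q i (t + W)) ^ 2) - (1 / 2) * (∑ i, (Q i t) ^ 2)
      - V * (∑ τ ∈ Finset.Ico t (t + W), U τ)
      ≤ ∑ τ ∈ Finset.Ico t (t + W),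
          ((∑ i, Q i t * (astar i τ - bstar i τ)) - V * Ustar τ + (N : ℝ) * B ^ 2 * W) := by
    rw [htel, Finset.mul_sum, ← Finset.sum_sub_distrib]
    exact Finset.sum_le_sum hslot
  have hrhs : ∑ τ ∈ Finset.Ico t (t + W),
      ((∑ i, Q i t * (astar i τ - bstar i τ)) - V * Ustar τ + (N : ℝ) * B ^ 2 * W)
      = (∑ i, Q i t * (∑ τ ∈ Finset.Ico t (t + W), (astar i τ - bstar i τ)))
        - V * (∑ τ ∈ Finset.Ico t (t + W), Ustar τ) + (N : ℝ) * B ^ 2 * (W : ℝ) ^ 2 := by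
    rw [Finset.sum_add_distrib, Finset.sum_sub_distrib, Finset.sum_comm]
    simp only [← Finset.mul_sum, Finset.sum_const, Nat.card_Ico, Nat.add_sub_cancel_left,
      nsmul_eq_mul]
    rw [Finset.mul_sum]
    ring
  have hfin : (N : ℝ) * B ^ 2 * (W : ℝ) ^ 2 ≤ 7 * (N : ℝ) * B ^ 2 * (W : ℝ) ^ 2 := by
    have : (0 : ℝ) ≤ (N : ℝ) * B ^ 2 * (W : ℝ) ^ 2 := by positivity
    linarith
  rw [hrhs] at hmain
  linarith
end

section
/- Let N ≥ 1, B ≥ 0, V ≥ 0, and for each i ∈ {1,…,N} let Q_i, a_i, b_i, a*_i, b*_i : ℕ → ℝ satisfy Q_i(0) ≥ 0, Q_i(t+1) = max(Q_i(t) + a_i(t) − b_i(t), 0), and 0 ≤ a_i(t), b_i(t), a*_i(t), b*_i(t) ≤ B for all t. Let U, U* : ℕ → ℝ and suppose the Drift-plus-Penalty property holds: for every slot τ, Σ_{i=1}^N Q_i(τ)(b_i(τ) − a_i(τ)) + V·U(τ) ≥ Σ_{i=1}^N Q_i(τ)(b*_i(τ) − a*_i(τ)) + V·U*(τ). Fix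 t ∈ ℕ and W ∈ ℕ and suppose the comparator satisfies the window constraint Σ_{τ=t}^{t+W−1} a*_i(τ) ≤ Σ_{τ=t}^{t+W−1} b*_i(τ) for every i. Define Φ(t) = (1/2) Σ_{i=1}^N Q_i(t)². Then Φ(t+W) − Φ(t) − V Σ_{τ=t}^{t+W−1} U(τ) ≤ − V Σ_{τ=t}^{t+W−1} U*(τ) + 7·N·B²·W². -/
open Finset

/-- `W`-slot drift-plus-penalty bound under the window constraint on the comparator
(Lemma `lm:drift-penalty`): if over the window of `W` slots starting at `t` the
comparator arrivals to each queue do not exceed the comparator service, then the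
drift-plus-penalty term is bounded by the comparator's utility plus `7NB²W²`. -/
theorem drift_plus_penalty_window_bound (N : ℕ) (hN : 1 ≤ N) (B : ℝ) (hB : 0 ≤ B)
    (V : ℝ) (hV : 0 ≤ V)
    (Q a b astar bstar : Fin N → ℕ → ℝ) (U Ustar : ℕ → ℝ)
    (hQ0 : ∀ i, 0 ≤ Q i 0)
    (hrec : ∀ i t, Q i (t + 1) = max (Q i t + a i t - b i t) 0)
    (hbnd : ∀ i t, (0 ≤ a i t ∧ a i t ≤ B) ∧ (0 ≤ b i t ∧ b i t ≤ B) ∧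
      (0 ≤ astar i t ∧ astar i t ≤ B) ∧ (0 ≤ bstar i t ∧ bstar i t ≤ B))
    (hDPP : ∀ τ, (∑ i, Q i τ * (b i τ - a i τ)) + V * U τ ≥
      (∑ i, Q i τ * (bstar i τ - astar i τ)) + V * Ustar τ)
    (t W : ℕ)
    (hwindow : ∀ i, (∑ τ ∈ Finset.Ico t (t + W), astar i τ) ≤
      ∑ τ ∈ Finset.Ico t (t + W), bstar i τ) :
    (1 / 2) * (∑ i, (Q i (t + W)) ^ 2) - (1 / 2) * (∑ i, (Q i t) ^ 2)
        - V * (∑ τ ∈ Finset.Ico t (t + W), U τ) ≤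
      - V * (∑ τ ∈ Finset.Ico t (t + W), Ustar τ)
        + 7 * (N : ℝ) * B ^ 2 * (W : ℝ) ^ 2 := by
  have hQnn : ∀ i τ, 0 ≤ Q i τ := by
    intro i τ
    induction τ with
    | zero => exact hQ0 i
    | succ n ih => rw [hrec]; exact le_max_right _ _
  -- one-step Lipschitz
  have hlip : ∀ i τ, |Q i (τ + 1) - Q i τ| ≤ B := by
    intro i τ
    obtain ⟨⟨ha0, haB⟩, ⟨hb0, hbB⟩, _, _⟩ := hbnd i τ
    have hq := hQnn i τ
    rw [hrec, abs_le]
    rcases le_or_gt 0 (Q i τ + a i τ - b i τ) with h | h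
    · rw [max_eq_left h]; constructor <;> nlinarith
    · rw [max_eq_right h.le]; constructor <;> nlinarith
  -- deviation over the window
  have hdev : ∀ i k, |Q i (t + k) - Q i t| ≤ B * k := by
    intro i k
    induction k with
    | zero => simp
    | succ n ih =>
      have h1 := hlip i (t + n)
      have h2 : |Q i (t + (n + 1)) - Q i t| ≤
          |Q i (t + n + 1) - Q i (t + n)| + |Q i (t + n) - Q i t| := by
        rw [show t + (n + 1) = t + n + 1 from rfl]
        exact abs_sub_le _ _ _
      have : ((n : ℝ) + 1) = (n : ℝ) + 1 := rfl
      push_cast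
      nlinarith
  -- per-slot drift bound
  have hstep : ∀ τ, (1 / 2) * (∑ i, (Q i (τ + 1)) ^ 2) - (1 / 2) * (∑ i, (Q i τ) ^ 2)
      ≤ (∑ i, Q i τ * (a i τ - b i τ)) + (N : ℝ) * B ^ 2 / 2 := by
    intro τ
    have key : ∀ i : Fin N, (1 / 2) * (Q i (τ + 1)) ^ 2 - (1 / 2) * (Q i τ) ^ 2
        ≤ Q i τ * (a i τ - b i τ) + B ^ 2 / 2 := by
      intro i
      obtain ⟨⟨ha0, haB⟩, ⟨hb0, hbB⟩, _, _⟩ := hbnd i τ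
      have hsq : (Q i (τ + 1)) ^ 2 ≤ (Q i τ + a i τ - b i τ) ^ 2 := by
        rw [hrec]
        rcases le_or_gt 0 (Q i τ + a i τ - b i τ) with h | h
        · rw [max_eq_left h]
        · rw [max_eq_right h.le]
          nlinarith [sq_nonneg (Q i τ + a i τ - b i τ)]
      nlinarith
    calc (1 / 2) * (∑ i, (Q i (τ + 1)) ^ 2) - (1 / 2) * (∑ i, (Q i τ) ^ 2)
        = ∑ i, ((1 / 2) * (Q i (τ + 1)) ^ 2 - (1 / 2) * (Q i τ) ^ 2) := by
          rw [Finset.sum_sub_distrib, Finset.mul_sum, Finset.mul_sum]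
      _ ≤ ∑ i : Fin N, (Q i τ * (a i τ - b i τ) + B ^ 2 / 2) :=
          Finset.sum_le_sum fun i _ => key i
      _ = (∑ i, Q i τ * (a i τ - b i τ)) + (N : ℝ) * B ^ 2 / 2 := by
          rw [Finset.sum_add_distrib, Finset.sum_const, Finset.card_univ, Fintype.card_fin]
          ring
  -- telescoping + per-slot DPP
  have hmain : (1 / 2) * (∑ i, (Q i (t + W)) ^ 2) - (1 / 2) * (∑ i, (Q i t) ^ 2)
      - V * (∑ τ ∈ Finset.Ico t (t + W), U τ)
      ≤ ∑ τ ∈ Finset.Ico t (t + W),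
          ((∑ i, Q i τ * (astar i τ - bstar i τ)) - V * Ustar τ + (N : ℝ) * B ^ 2 / 2) := by
    have tele : ∀ W', (1 / 2) * (∑ i, (Q i (t + W')) ^ 2) - (1 / 2) * (∑ i, (Q i t) ^ 2)
        - V * (∑ τ ∈ Finset.Ico t (t + W'), U τ)
        ≤ ∑ τ ∈ Finset.Ico t (t + W'),
            ((∑ i, Q i τ * (astar i τ - bstar i τ)) - V * Ustar τ + (N : ℝ) * B ^ 2 / 2) := by
      intro W'
      induction W' with
      | zero => simp
      | succ n ih =>
        rw [show t + (n + 1) = (t + n) + 1 from rfl,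
          Finset.sum_Ico_succ_top (by omega : t ≤ t + n),
          Finset.sum_Ico_succ_top (by omega : t ≤ t + n)]
        have h1 := hstep (t + n)
        have h2 := hDPP (t + n)
        have h3 : ∑ i, (Q i (t+n) * (a i (t+n) - b i (t+n)) + Q i (t+n) * (b i (t+n) - a i (t+n))) = 0 :=
          Finset.sum_eq_zero fun i _ => by ring
        have h4 : ∑ i, (Q i (t+n) * (astar i (t+n) - bstar i (t+n)) + Q i (t+n) * (bstar i (t+n) - astar i (t+n))) = 0 :=
          Finset.sum_eq_zero fun i _ => by ring
        rw [Finset.sum_add_distrib] at h3 h4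
        linarith
    exact tele W
  -- bound the comparator cross term
  have hcross : ∑ τ ∈ Finset.Ico t (t + W),
      (∑ i, Q i τ * (astar i τ - bstar i τ)) ≤ (N : ℝ) * B ^ 2 * (W : ℝ) ^ 2 := by
    rw [Finset.sum_comm]
    have hi : ∀ i : Fin N, ∑ τ ∈ Finset.Ico t (t + W), Q i τ * (astar i τ - bstar i τ)
        ≤ B ^ 2 * (W : ℝ) ^ 2 := by
      intro i
      have split : ∑ τ ∈ Finset.Ico t (t + W), Q i τ * (astar i τ - bstar i τ)
          = Q i t * ((∑ τ ∈ Finset.Ico t (t + W), astar i τ)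
              - ∑ τ ∈ Finset.Ico t (t + W), bstar i τ)
            + ∑ τ ∈ Finset.Ico t (t + W), (Q i τ - Q i t) * (astar i τ - bstar i τ) := by
        rw [mul_sub, Finset.mul_sum, Finset.mul_sum, ← Finset.sum_sub_distrib,
          ← Finset.sum_add_distrib]
        exact Finset.sum_congr rfl fun τ _ => by ring
      rw [split]
      have h1 : Q i t * ((∑ τ ∈ Finset.Ico t (t + W), astar i τ)
          - ∑ τ ∈ Finset.Ico t (t + W), bstar i τ) ≤ 0 :=
        mul_nonpos_of_nonneg_of_nonpos (hQnn i t) (by linarith [hwindow i])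
      have h2 : ∑ τ ∈ Finset.Ico t (t + W), (Q i τ - Q i t) * (astar i τ - bstar i τ)
          ≤ ∑ τ ∈ Finset.Ico t (t + W), (B * W) * B := by
        apply Finset.sum_le_sum
        intro τ hτ
        rw [Finset.mem_Ico] at hτ
        obtain ⟨hτ1, hτ2⟩ := hτ
        obtain ⟨k, hk⟩ : ∃ k, τ = t + k := ⟨τ - t, by omega⟩
        have hkW : k ≤ W := by omega
        obtain ⟨_, _, ⟨has0, hasB⟩, ⟨hbs0, hbsB⟩⟩ := hbnd i τ
        have hd := hdev i k
        rw [← hk] at hd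
        have hd' : |Q i τ - Q i t| ≤ B * W := by
          refine hd.trans ?_
          have : (k : ℝ) ≤ (W : ℝ) := by exact_mod_cast hkW
          nlinarith
        have hab : |astar i τ - bstar i τ| ≤ B := by rw [abs_le]; constructor <;> linarith
        calc (Q i τ - Q i t) * (astar i τ - bstar i τ)
            ≤ |(Q i τ - Q i t) * (astar i τ - bstar i τ)| := le_abs_self _
          _ = |Q i τ - Q i t| * |astar i τ - bstar i τ| := abs_mul _ _
          _ ≤ (B * W) * B := by
              apply mul_le_mul hd' hab (abs_nonneg _) (by positivity)
      have h3 : ∑ τ ∈ Finset.Ico t (t + W), (B * (W : ℝ)) * B = B ^ 2 * (W : ℝ) ^ 2 := by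
        rw [Finset.sum_const, Nat.card_Ico]
        push_cast
        ring_nf
        rw [show t + W - t = W from by omega]
        push_cast; ring
      linarith [h3 ▸ h2]
    calc ∑ i : Fin N, ∑ τ ∈ Finset.Ico t (t + W), Q i τ * (astar i τ - bstar i τ)
        ≤ ∑ i : Fin N, B ^ 2 * (W : ℝ) ^ 2 := Finset.sum_le_sum fun i _ => hi i
      _ = (N : ℝ) * B ^ 2 * (W : ℝ) ^ 2 := by
          rw [Finset.sum_const, Finset.card_univ, Fintype.card_fin]; ring
  -- put it together
  have hsum_split : ∑ τ ∈ Finset.Ico t (t + W),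
      ((∑ i, Q i τ * (astar i τ - bstar i τ)) - V * Ustar τ + (N : ℝ) * B ^ 2 / 2)
      = (∑ τ ∈ Finset.Ico t (t + W), (∑ i, Q i τ * (astar i τ - bstar i τ)))
        - V * (∑ τ ∈ Finset.Ico t (t + W), Ustar τ)
        + (W : ℝ) * ((N : ℝ) * B ^ 2 / 2) := by
    rw [Finset.sum_add_distrib, Finset.sum_sub_distrib, Finset.sum_const, Nat.card_Ico,
      ← Finset.mul_sum]
    rw [show t + W - t = W from by omega]
    ring
  have hW2 : (W : ℝ) ≤ (W : ℝ) ^ 2 := by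
    have : W ≤ W ^ 2 := by nlinarith [Nat.zero_le W]
    exact_mod_cast this
  have hN1 : (1 : ℝ) ≤ (N : ℝ) := by exact_mod_cast hN
  nlinarith [hmain, hsum_split ▸ hmain, hcross, sq_nonneg B,
    mul_nonneg (mul_nonneg (Nat.cast_nonneg N) (sq_nonneg B)) (Nat.cast_nonneg W),
    mul_le_mul_of_nonneg_left hW2 (mul_nonneg (Nat.cast_nonneg N) (sq_nonneg B))]
end

section
/- Let N ≥ 1, B ≥ 0, V ≥ 0, W ≥ 1 and T ≥ 1 with W dividing T. For each i ∈ {1,…,N} let Q_i, a_i, b_i, a*_i, b*_i satisfy Q_i(0) = 0, Q_i(t+1) = max(Q_i(t) + a_i(t) − b_i(t), 0), and 0 ≤ a_i(t), b_i(t), a*_i(t), b*_i(t) ≤ B for t ∈ {0,…,T−1}. Let U, U* take values in [U_min, U_max], suppose the Drift-plus-Penalty property holds at every slot t < T (Σ_{i} Q_i(t)(b_i(t) − a_i(t)) + V·U(t) ≥ Σ_{i} Q_i(t)(b*_i(t) − a*_i(t)) + V·U*(t)), and suppose the comparator satisfies the W-window constraint Σ_{τ=t}^{t+W−1} a*_i(τ)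 ≤ Σ_{τ=t}^{t+W−1} b*_i(τ) for every i and every t that is a multiple of W with t + W ≤ T. Then the total final queue length satisfies Σ_{i=1}^N Q_i(T) ≤ √( 2N ( V·T·(U_max − U_min) + 7·N·B²·W·T ) ). In particular, for fixed N and B, the total queue length is O(√(T(W+V))). -/
/-!
The proof is the Lyapunov drift argument with `L(t) = ∑ᵢ Qᵢ(t)²`. Squaring the queue recursion gives
`L(t+1) ≤ L(t) - 2 ∑ᵢ Qᵢ(t)(bᵢ(t) - aᵢ(t)) + N B²`, and the Drift-plus-Penalty property lets us trade the
policy's weighted service for the comparator's at the price `V (U_max - U_min)`. The comparator is only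
balanced over each window of `W` slots, so within a window we freeze the queues at their value at the
window's start: the frozen term is nonpositive by the window constraint, and the error is at most
`W B · B` per slot since queues move by at most `B` per slot. Summing over the `T / W` windows bounds
`L(T)`, and Cauchy–Schwarz `(∑ᵢ Qᵢ)² ≤ N ∑ᵢ Qᵢ²` turns this into the bound on the total queue length.
-/

open Finset

lemma sum_range_mul_eq_sum_range_sum_Ico {M : Type*} [AddCommMonoid M] (W m : ℕ) (f : ℕ → M) :
    ∑ t ∈ range (W * m), f t = ∑ k ∈ range m, ∑ t ∈ Ico (W * k) (W * k + W), f t := by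
  induction m with
  | zero => simp
  | succ m ih =>
    rw [sum_range_succ, ← ih, Nat.mul_succ, range_eq_Ico, range_eq_Ico,
      sum_Ico_consecutive f (Nat.zero_le _) (Nat.le_add_right _ _)]

lemma nsmul_le_sum_range_mul {M : Type*} [AddCommMonoid M] [PartialOrder M]
    [IsOrderedAddMonoid M] {W m : ℕ} {f : ℕ → M} {c : M}
    (h : ∀ k < m, c ≤ ∑ t ∈ Ico (W * k) (W * k + W), f t) :
    m • c ≤ ∑ t ∈ range (W * m), f t := by
  calc m • c = ∑ _k ∈ range m, c := by rw [sum_const, card_range]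
    _ ≤ ∑ k ∈ range m, ∑ t ∈ Ico (W * k) (W * k + W), f t :=
        sum_le_sum fun k hk => h k (mem_range.1 hk)
    _ = ∑ t ∈ range (W * m), f t := (sum_range_mul_eq_sum_range_sum_Ico W m f).symm

lemma le_add_sum_range_of_succ_le {α : Type*} [AddCommMonoid α] [PartialOrder α]
    [IsOrderedAddMonoid α] {L c : ℕ → α} {T : ℕ} (h : ∀ t < T, L (t + 1) ≤ L t + c t) :
    L T ≤ L 0 + ∑ t ∈ range T, c t := by
  induction T with
  | zero => simp
  | succ T ih =>
    calc L (T + 1) ≤ L T + c T := h T T.lt_succ_self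
      _ ≤ L 0 + ∑ t ∈ range T, c t + c T := by
        gcongr
        exact ih fun t ht => h t (ht.trans T.lt_succ_self)
      _ = L 0 + ∑ t ∈ range (T + 1), c t := by rw [sum_range_succ, add_assoc]

lemma neg_card_mul_le_sum_mul {ι : Type*} (s : Finset ι) {f g : ι → ℝ} {x₀ c B : ℝ}
    (hx₀ : 0 ≤ x₀) (hg : 0 ≤ ∑ t ∈ s, g t) (hf : ∀ t ∈ s, |f t - x₀| ≤ c)
    (hgB : ∀ t ∈ s, |g t| ≤ B) :
    -(#s * (c * B)) ≤ ∑ t ∈ s, f t * g t := by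
  have hterm : ∀ t ∈ s, x₀ * g t - c * B ≤ f t * g t := by
    intro t ht
    have herr : |(f t - x₀) * g t| ≤ c * B := by
      rw [abs_mul]
      exact mul_le_mul (hf t ht) (hgB t ht) (abs_nonneg _) ((abs_nonneg _).trans (hf t ht))
    linarith [neg_abs_le ((f t - x₀) * g t)]
  calc -(#s * (c * B)) ≤ x₀ * ∑ t ∈ s, g t - #s * (c * B) := by
        linarith [mul_nonneg hx₀ hg]
    _ = ∑ t ∈ s, (x₀ * g t - c * B) := by
        rw [sum_sub_distrib, mul_sum, sum_const, nsmul_eq_mul]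
    _ ≤ ∑ t ∈ s, f t * g t := sum_le_sum hterm

lemma sum_le_sqrt_card_mul_sum_sq {ι : Type*} (s : Finset ι) (f : ι → ℝ) :
    ∑ i ∈ s, f i ≤ √(#s * ∑ i ∈ s, f i ^ 2) :=
  (le_abs_self _).trans (Real.abs_le_sqrt sq_sum_le_card_mul_sum_sq)

section Queue

variable {q a b : ℕ → ℝ}

lemma queue_nonneg (h0 : 0 ≤ q 0) (hq : ∀ t, q (t + 1) = max (q t + a t - b t) 0) (t : ℕ) :
    0 ≤ q t := by
  cases t with
  | zero => exact h0
  | succ t => rw [hq]; exact le_max_right _ _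

lemma abs_queue_succ_sub_le (hq : ∀ t, q (t + 1) = max (q t + a t - b t) 0) {t : ℕ}
    (ht : 0 ≤ q t) : |q (t + 1) - q t| ≤ |a t - b t| :=
  calc |q (t + 1) - q t| = |max (q t + (a t - b t)) 0 - max (q t) 0| := by
        rw [hq, max_eq_left ht, add_sub_assoc]
    _ ≤ |q t + (a t - b t) - q t| := abs_max_sub_max_le_abs _ _ _
    _ = |a t - b t| := by rw [add_sub_cancel_left]

lemma abs_queue_sub_le (hq : ∀ t, q (t + 1) = max (q t + a t - b t) 0) (hq0 : ∀ t, 0 ≤ q t)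
    {B : ℝ} {m n : ℕ} (hmn : m ≤ n) (hab : ∀ t, m ≤ t → t < n → |a t - b t| ≤ B) :
    |q n - q m| ≤ (n - m : ℕ) * B := by
  have h := dist_le_Ico_sum_of_dist_le (f := q) hmn (d := fun _ => B) fun hk hk' => by
    rw [Real.dist_eq, abs_sub_comm]
    exact (abs_queue_succ_sub_le hq (hq0 _)).trans (hab _ hk hk')
  rwa [sum_const, Nat.card_Ico, nsmul_eq_mul, Real.dist_eq, abs_sub_comm] at h

end Queue

lemma sum_sq_max_add_sub_le {ι : Type*} [Fintype ι] (q a b : ι → ℝ) {B : ℝ}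
    (hab : ∀ i, |a i - b i| ≤ B) :
    ∑ i, max (q i + a i - b i) 0 ^ 2 ≤
      ∑ i, q i ^ 2 - 2 * ∑ i, q i * (b i - a i) + Fintype.card ι * B ^ 2 := by
  have h : ∀ i, max (q i + a i - b i) 0 ^ 2 ≤ q i ^ 2 - 2 * (q i * (b i - a i)) + B ^ 2 := by
    intro i
    have hmax : max (q i + a i - b i) 0 ^ 2 ≤ (q i + a i - b i) ^ 2 := by
      rcases le_total (q i + a i - b i) 0 with h | h
      · rw [max_eq_right h, zero_pow two_ne_zero]; exact sq_nonneg _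
      · rw [max_eq_left h]
    have hB : (a i - b i) ^ 2 ≤ B ^ 2 := sq_le_sq.2 ((hab i).trans (le_abs_self B))
    nlinarith
  calc ∑ i, max (q i + a i - b i) 0 ^ 2
      ≤ ∑ i, (q i ^ 2 - 2 * (q i * (b i - a i)) + B ^ 2) := sum_le_sum fun i _ => h i
    _ = _ := by rw [sum_add_distrib, sum_sub_distrib, mul_sum, sum_const, card_univ, nsmul_eq_mul]

lemma neg_le_sum_Ico_queue_mul_sub {ι : Type*} [Fintype ι] {Q a b astar bstar : ι → ℕ → ℝ}
    {B : ℝ} {s W : ℕ} (hrec : ∀ i t, Q i (t + 1) = max (Q i t + a i t - b i t) 0)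
    (hQ : ∀ i t, 0 ≤ Q i t) (hab : ∀ i t, s ≤ t → t < s + W → |a i t - b i t| ≤ B)
    (hstar : ∀ i t, s ≤ t → t < s + W → |bstar i t - astar i t| ≤ B)
    (hwindow : ∀ i, ∑ τ ∈ Ico s (s + W), astar i τ ≤ ∑ τ ∈ Ico s (s + W), bstar i τ) :
    -(Fintype.card ι * (W * (W * B * B))) ≤
      ∑ t ∈ Ico s (s + W), ∑ i, Q i t * (bstar i t - astar i t) := by
  have hdev : ∀ i, ∀ t ∈ Ico s (s + W), |Q i t - Q i s| ≤ W * B := by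
    intro i t ht
    obtain ⟨hst, hts⟩ := mem_Ico.1 ht
    have hB : 0 ≤ B := (abs_nonneg _).trans (hab i t hst hts)
    refine (abs_queue_sub_le (hrec i) (hQ i) hst fun τ h₁ h₂ => hab i τ h₁ (by omega)).trans ?_
    gcongr
    exact_mod_cast (by omega : t - s ≤ W)
  have hsum : ∀ i, 0 ≤ ∑ t ∈ Ico s (s + W), (bstar i t - astar i t) := fun i => by
    rw [sum_sub_distrib]; linarith [hwindow i]
  rw [sum_comm]
  calc -(Fintype.card ι * (W * (W * B * B)))
      = ∑ _i : ι, -(#(Ico s (s + W)) * (W * B * B)) := by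
        simp only [Nat.card_Ico, add_tsub_cancel_left, sum_const, card_univ, nsmul_eq_mul,
          mul_neg]
    _ ≤ _ := sum_le_sum fun i _ => neg_card_mul_le_sum_mul _ (hQ i s) (hsum i) (hdev i)
        fun t ht => hstar i t (mem_Ico.1 ht).1 (mem_Ico.1 ht).2

lemma neg_le_sum_range_queue_mul_sub {ι : Type*} [Fintype ι] {Q a b astar bstar : ι → ℕ → ℝ}
    {B : ℝ} {W m : ℕ} (hrec : ∀ i t, Q i (t + 1) = max (Q i t + a i t - b i t) 0)
    (hQ : ∀ i t, 0 ≤ Q i t) (hab : ∀ i, ∀ t < W * m, |a i t - b i t| ≤ B)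
    (hstar : ∀ i, ∀ t < W * m, |bstar i t - astar i t| ≤ B)
    (hwindow : ∀ t : ℕ, W ∣ t → t + W ≤ W * m → ∀ i,
      ∑ τ ∈ Ico t (t + W), astar i τ ≤ ∑ τ ∈ Ico t (t + W), bstar i τ) :
    m • -(Fintype.card ι * (W * (W * B * B))) ≤
      ∑ t ∈ range (W * m), ∑ i, Q i t * (bstar i t - astar i t) :=
  nsmul_le_sum_range_mul fun k hk => by
    have hk : W * k + W ≤ W * m := Nat.mul_succ W k ▸ Nat.mul_le_mul_left W hk
    exact neg_le_sum_Ico_queue_mul_sub hrec hQ (fun i t _ ht => hab i t (by omega))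
      (fun i t _ ht => hstar i t (by omega)) (hwindow _ (dvd_mul_right W k) hk)

lemma sum_sq_queue_le_of_dpp {ι : Type*} [Fintype ι] {Q a b astar bstar : ι → ℕ → ℝ}
    {U Ustar : ℕ → ℝ} {B V Δ : ℝ} {T : ℕ} (hQ0 : ∀ i, Q i 0 = 0)
    (hrec : ∀ i t, Q i (t + 1) = max (Q i t + a i t - b i t) 0)
    (hab : ∀ i, ∀ t < T, |a i t - b i t| ≤ B) (hV : 0 ≤ V) (hU : ∀ t < T, U t - Ustar t ≤ Δ)
    (hDPP : ∀ t < T, (∑ i, Q i t * (b i t - a i t)) + V * U t ≥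
      (∑ i, Q i t * (bstar i t - astar i t)) + V * Ustar t) :
    ∑ i, Q i T ^ 2 ≤ -2 * ∑ t ∈ range T, ∑ i, Q i t * (bstar i t - astar i t) +
      T * (2 * V * Δ + Fintype.card ι * B ^ 2) := by
  have h := le_add_sum_range_of_succ_le (L := fun t => ∑ i, Q i t ^ 2)
    (c := fun t => -2 * ∑ i, Q i t * (bstar i t - astar i t) +
      (2 * V * Δ + Fintype.card ι * B ^ 2)) fun t ht => by
    have hpenalty : V * (U t - Ustar t) ≤ V * Δ := mul_le_mul_of_nonneg_left (hU t ht) hV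
    simp only [hrec]
    linarith [sum_sq_max_add_sub_le (fun i => Q i t) (fun i => a i t) (fun i => b i t)
      fun i => hab i t ht, hDPP t ht]
  simpa [hQ0, sum_add_distrib, mul_sum, mul_add] using h

theorem DPP_queue_bound_W_constrained_general (N : ℕ) (B : ℝ)
    (V : ℝ) (hV : 0 ≤ V) (W T : ℕ) (hWT : W ∣ T)
    (Q a b astar bstar : Fin N → ℕ → ℝ) (U Ustar : ℕ → ℝ) (Umin Umax : ℝ)
    (hQ0 : ∀ i, Q i 0 = 0)
    (hrec : ∀ i t, Q i (t + 1) = max (Q i t + a i t - b i t) 0)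
    (hbnd : ∀ i, ∀ t < T, (0 ≤ a i t ∧ a i t ≤ B) ∧ (0 ≤ b i t ∧ b i t ≤ B) ∧
      (0 ≤ astar i t ∧ astar i t ≤ B) ∧ (0 ≤ bstar i t ∧ bstar i t ≤ B))
    (hU : ∀ t < T, Umin ≤ U t ∧ U t ≤ Umax)
    (hUstar : ∀ t < T, Umin ≤ Ustar t ∧ Ustar t ≤ Umax)
    (hDPP : ∀ t < T, (∑ i, Q i t * (b i t - a i t)) + V * U t ≥
      (∑ i, Q i t * (bstar i t - astar i t)) + V * Ustar t)
    (hwindow : ∀ t : ℕ, W ∣ t → t + W ≤ T → ∀ i,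
      (∑ τ ∈ Finset.Ico t (t + W), astar i τ) ≤ ∑ τ ∈ Finset.Ico t (t + W), bstar i τ) :
    (∑ i, Q i T) ≤
      Real.sqrt (2 * (N : ℝ) *
        (V * (T : ℝ) * (Umax - Umin) + 7 * (N : ℝ) * B ^ 2 * (W : ℝ) * (T : ℝ))) := by
  obtain ⟨m, rfl⟩ := hWT
  have hQ : ∀ i t, 0 ≤ Q i t := fun i => queue_nonneg (hQ0 i).ge (hrec i)
  have hab : ∀ i, ∀ t < W * m, |a i t - b i t| ≤ B := fun i t ht =>
    have h := hbnd i t ht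
    abs_sub_le_of_nonneg_of_le h.1.1 h.1.2 h.2.1.1 h.2.1.2
  have hstar : ∀ i, ∀ t < W * m, |bstar i t - astar i t| ≤ B := fun i t ht =>
    have h := hbnd i t ht
    abs_sub_le_of_nonneg_of_le h.2.2.2.1 h.2.2.2.2 h.2.2.1.1 h.2.2.1.2
  have hL := sum_sq_queue_le_of_dpp (Δ := Umax - Umin) hQ0 hrec hab hV
    (fun t ht => by linarith [hU t ht, hUstar t ht]) hDPP
  have hwindows := neg_le_sum_range_queue_mul_sub hrec hQ hab hstar hwindow
  simp only [Fintype.card_fin, nsmul_eq_mul] at hL hwindows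
  -- `W ≤ W²` lets the window term absorb the per-slot `N B²` terms.
  have hWW : (W : ℝ) ≤ W * W := by exact_mod_cast Nat.le_mul_self W
  calc ∑ i, Q i (W * m) ≤ √(N * ∑ i, Q i (W * m) ^ 2) := by
        simpa using sum_le_sqrt_card_mul_sum_sq univ fun i => Q i (W * m)
    _ ≤ _ := Real.sqrt_le_sqrt <| by
        push_cast at hL ⊢
        nlinarith [mul_le_mul_of_nonneg_left hWW (by positivity : (0 : ℝ) ≤ N ^ 2 * m * B ^ 2),
          mul_le_mul_of_nonneg_left hL (Nat.cast_nonneg N : (0 : ℝ) ≤ N),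
          (by positivity : (0 : ℝ) ≤ N ^ 2 * m * B ^ 2 * W * W)]

/-- Queue-length half of Theorem 3: under the `W`-constrained adversary model, the
Drift-plus-Penalty algorithm with parameter `V` keeps the total final queue length
at most `√(2N(VT(U_max − U_min) + 7NB²WT))`, i.e. `O(√(T(W+V)))`. -/
theorem DPP_queue_bound_W_constrained (N : ℕ) (hN : 1 ≤ N) (B : ℝ) (hB : 0 ≤ B)
    (V : ℝ) (hV : 0 ≤ V) (W T : ℕ) (hW : 1 ≤ W) (hT : 1 ≤ T) (hWT : W ∣ T)
    (Q a b astar bstar : Fin N → ℕ → ℝ) (U Ustar : ℕ → ℝ) (Umin Umax : ℝ)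
    (hQ0 : ∀ i, Q i 0 = 0)
    (hrec : ∀ i t, Q i (t + 1) = max (Q i t + a i t - b i t) 0)
    (hbnd : ∀ i, ∀ t < T, (0 ≤ a i t ∧ a i t ≤ B) ∧ (0 ≤ b i t ∧ b i t ≤ B) ∧
      (0 ≤ astar i t ∧ astar i t ≤ B) ∧ (0 ≤ bstar i t ∧ bstar i t ≤ B))
    (hU : ∀ t < T, Umin ≤ U t ∧ U t ≤ Umax)
    (hUstar : ∀ t < T, Umin ≤ Ustar t ∧ Ustar t ≤ Umax)
    (hDPP : ∀ t < T, (∑ i, Q i t * (b i t - a i t)) + V * U t ≥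
      (∑ i, Q i t * (bstar i t - astar i t)) + V * Ustar t)
    (hwindow : ∀ t : ℕ, W ∣ t → t + W ≤ T → ∀ i,
      (∑ τ ∈ Finset.Ico t (t + W), astar i τ) ≤ ∑ τ ∈ Finset.Ico t (t + W), bstar i τ) :
    (∑ i, Q i T) ≤
      Real.sqrt (2 * (N : ℝ) *
        (V * (T : ℝ) * (Umax - Umin) + 7 * (N : ℝ) * B ^ 2 * (W : ℝ) * (T : ℝ))) :=
  DPP_queue_bound_W_constrained_general N B V hV W T hWT Q a b astar bstar U Ustar Umin Umax hQ0
    hrec hbnd hU hUstar hDPP hwindow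
end

section
/- Let N ≥ 1, B ≥ 0, V > 0, W ≥ 1 and T ≥ 1 with W dividing T. For each i ∈ {1,…,N} let Q_i, a_i, b_i, a*_i, b*_i satisfy Q_i(0) = 0, Q_i(t+1) = max(Q_i(t) + a_i(t) − b_i(t), 0), and 0 ≤ a_i(t), b_i(t), a*_i(t), b*_i(t) ≤ B for t ∈ {0,…,T−1}. Let U, U* : {0,…,T−1} → ℝ, suppose the Drift-plus-Penalty property holds at every slot t < T (Σ_{i} Q_i(t)(b_i(t) − a_i(t)) + V·U(t) ≥ Σ_{i} Q_i(t)(b*_i(t) − a*_i(t)) + V·U*(t)), and suppose the comparator satisfies the W-window constraint Σ_{τ=t}^{t+W−1} a*_i(τ) ≤ Σ_{τ=t}^{t+W−1} b*_i(τ) for every i and every t that is a multiple of W with t + W ≤ T. Then the utility regret relative to the comparator satisfies Σ_{t=0}^{T−1} U*(t) − Σ_{t=0}^{T−1} U(t) ≤ 7·N·B²·W·T / V. In particular, for fixed N and B, the utility regret is O(TW/V). -/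
open Finset

/-- Utility-regret half of Theorem 3: under the `W`-constrained adversary model, the
Drift-plus-Penalty algorithm with parameter `V > 0` has utility regret relative to
the comparator at most `7NB²WT/V`, i.e. `O(TW/V)`. -/
theorem DPP_regret_bound_W_constrained (N : ℕ) (hN : 1 ≤ N) (B : ℝ) (hB : 0 ≤ B)
    (V : ℝ) (hV : 0 < V) (W T : ℕ) (hW : 1 ≤ W) (hT : 1 ≤ T) (hWT : W ∣ T)
    (Q a b astar bstar : Fin N → ℕ → ℝ) (U Ustar : ℕ → ℝ)
    (hQ0 : ∀ i, Q i 0 = 0)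
    (hrec : ∀ i t, Q i (t + 1) = max (Q i t + a i t - b i t) 0)
    (hbnd : ∀ i, ∀ t < T, (0 ≤ a i t ∧ a i t ≤ B) ∧ (0 ≤ b i t ∧ b i t ≤ B) ∧
      (0 ≤ astar i t ∧ astar i t ≤ B) ∧ (0 ≤ bstar i t ∧ bstar i t ≤ B))
    (hDPP : ∀ t < T, (∑ i, Q i t * (b i t - a i t)) + V * U t ≥
      (∑ i, Q i t * (bstar i t - astar i t)) + V * Ustar t)
    (hwindow : ∀ t : ℕ, W ∣ t → t + W ≤ T → ∀ i,
      (∑ τ ∈ Finset.Ico t (t + W), astar i τ) ≤ ∑ τ ∈ Finset.Ico t (t + W), bstar i τ) :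
    (∑ t ∈ Finset.range T, Ustar t) - (∑ t ∈ Finset.range T, U t) ≤
      7 * (N : ℝ) * B ^ 2 * (W : ℝ) * (T : ℝ) / V := by
  obtain ⟨m, hm⟩ := hWT
  -- nonnegativity of queues
  have hQnn : ∀ i t, 0 ≤ Q i t := by
    intro i t
    cases t with
    | zero => simp [hQ0]
    | succ n => rw [hrec]; exact le_max_right _ _
  -- one-step Lipschitz bound
  have hstep : ∀ i, ∀ t < T, |Q i (t + 1) - Q i t| ≤ B := by
    intro i t ht
    obtain ⟨⟨ha0, haB⟩, ⟨hb0, hbB⟩, _⟩ := hbnd i t ht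
    rw [abs_le, hrec]
    constructor
    · have h1 : Q i t - B ≤ Q i t + a i t - b i t := by linarith
      nlinarith [le_max_left (Q i t + a i t - b i t) (0:ℝ)]
    · have h1 : Q i t + a i t - b i t ≤ Q i t + B := by linarith
      have h2 : (0:ℝ) ≤ Q i t + B := by have := hQnn i t; linarith
      have := max_le h1 h2
      linarith
  -- multi-step Lipschitz bound
  have hlip : ∀ i s d, s + d ≤ T → |Q i (s + d) - Q i s| ≤ B * d := by
    intro i s d
    induction d with
    | zero => intro _; simp
    | succ n ih =>
      intro h
      have h1 : s + n ≤ T := by omega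
      have h2 : s + n < T := by omega
      have := hstep i (s + n) h2
      have := ih h1
      have habs : |Q i (s + (n+1)) - Q i s| ≤ |Q i (s + n + 1) - Q i (s + n)| + |Q i (s + n) - Q i s| := by
        have hx : Q i (s + (n+1)) - Q i s = (Q i (s + n + 1) - Q i (s + n)) + (Q i (s + n) - Q i s) := by
          have hix : s + (n+1) = s + n + 1 := rfl
          rw [hix]; ring
        rw [hx]; exact abs_add_le _ _
      push_cast
      calc |Q i (s + (n+1)) - Q i s| ≤ B + B * n := by linarith
        _ = B * (n + 1) := by ring
  -- drift bound per slot
  have hdrift : ∀ t < T,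
      (∑ i, (Q i (t+1))^2) ≤ (∑ i, (Q i t)^2) + N * B^2 + 2 * ∑ i, Q i t * (a i t - b i t) := by
    intro t ht
    have hper : ∀ i : Fin N, (Q i (t+1))^2 ≤ (Q i t)^2 + B^2 + 2 * (Q i t * (a i t - b i t)) := by
      intro i
      obtain ⟨⟨ha0, haB⟩, ⟨hb0, hbB⟩, _⟩ := hbnd i t ht
      have hmx : (Q i (t+1))^2 ≤ (Q i t + a i t - b i t)^2 := by
        rw [hrec]
        rcases le_or_gt 0 (Q i t + a i t - b i t) with h | h
        · rw [max_eq_left h]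
        · rw [max_eq_right h.le]; simpa using sq_nonneg (Q i t + a i t - b i t)
      nlinarith [sq_nonneg (a i t - b i t)]
    calc (∑ i, (Q i (t+1))^2)
        ≤ ∑ i, ((Q i t)^2 + B^2 + 2 * (Q i t * (a i t - b i t))) :=
          Finset.sum_le_sum fun i _ => hper i
      _ = (∑ i, (Q i t)^2) + N * B^2 + 2 * ∑ i, Q i t * (a i t - b i t) := by
          rw [Finset.sum_add_distrib, Finset.sum_add_distrib, Finset.sum_const,
            Finset.card_univ, ← Finset.mul_sum]
          simp [mul_comm]
  -- telescoped drift bound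
  have hPhinn : ∀ t, (0:ℝ) ≤ ∑ i, (Q i t)^2 := fun t => Finset.sum_nonneg fun i _ => sq_nonneg _
  have hdriftsum : ∑ t ∈ Finset.range T, ∑ i, Q i t * (b i t - a i t) ≤ T * (N * B^2) / 2 := by
    have h1 : ∀ t ∈ Finset.range T,
        ∑ i, Q i t * (b i t - a i t)
          ≤ ((∑ i, (Q i t)^2) - ∑ i, (Q i (t+1))^2) / 2 + N * B^2 / 2 := by
      intro t ht
      rw [Finset.mem_range] at ht
      have := hdrift t ht
      have heq : ∑ i, Q i t * (b i t - a i t) = - ∑ i, Q i t * (a i t - b i t) := by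
        rw [← Finset.sum_neg_distrib]
        exact Finset.sum_congr rfl fun i _ => by ring
      rw [heq]; linarith
    calc ∑ t ∈ Finset.range T, ∑ i, Q i t * (b i t - a i t)
        ≤ ∑ t ∈ Finset.range T, (((∑ i, (Q i t)^2) - ∑ i, (Q i (t+1))^2) / 2 + N * B^2 / 2) :=
          Finset.sum_le_sum h1
      _ = ((∑ i, (Q i 0)^2) - ∑ i, (Q i T)^2) / 2 + T * (N * B^2 / 2) := by
          rw [Finset.sum_add_distrib, Finset.sum_const, Finset.card_range, ← Finset.sum_div,
            Finset.sum_range_sub' (fun t => ∑ i, (Q i t)^2)]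
          push_cast; ring
      _ ≤ T * (N * B^2) / 2 := by
          have h0 : (∑ i, (Q i 0)^2) = 0 := by simp [hQ0]
          have := hPhinn T
          rw [h0]; linarith
  -- window bound
  have hwin : ∀ k < m, ∀ i : Fin N,
      ∑ t ∈ Finset.Ico (k*W) (k*W + W), Q i t * (astar i t - bstar i t) ≤ B^2 * W^2 := by
    intro k hk i
    set s := k * W with hs
    have hsT : s + W ≤ T := by
      rw [hm]; calc s + W = (k+1) * W := by ring
        _ ≤ m * W := Nat.mul_le_mul_right _ (by omega)
        _ = W * m := by ring
    have hsplit : ∀ t ∈ Finset.Ico s (s + W),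
        Q i t * (astar i t - bstar i t)
          = (Q i t - Q i s) * (astar i t - bstar i t) + Q i s * (astar i t - bstar i t) := by
      intro t _; ring
    rw [Finset.sum_congr rfl hsplit, Finset.sum_add_distrib]
    have hpart1 : ∑ t ∈ Finset.Ico s (s + W), (Q i t - Q i s) * (astar i t - bstar i t)
        ≤ ∑ t ∈ Finset.Ico s (s + W), B * W * B := by
      apply Finset.sum_le_sum
      intro t ht
      rw [Finset.mem_Ico] at ht
      have htT : t < T := by omega
      obtain ⟨_, _, ⟨has0, hasB⟩, ⟨hbs0, hbsB⟩⟩ := hbnd i t htT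
      have hd : |Q i t - Q i s| ≤ B * W := by
        have h1 := hlip i s (t - s) (by omega)
        have h2 : s + (t - s) = t := by omega
        rw [h2] at h1
        calc |Q i t - Q i s| ≤ B * (t - s : ℕ) := h1
          _ ≤ B * W := by
            apply mul_le_mul_of_nonneg_left _ hB
            exact_mod_cast Nat.le_of_lt_succ (by omega)
      have hx : |astar i t - bstar i t| ≤ B := abs_sub_le_of_nonneg_of_le has0 hasB hbs0 hbsB
      calc (Q i t - Q i s) * (astar i t - bstar i t)
          ≤ |(Q i t - Q i s) * (astar i t - bstar i t)| := le_abs_self _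
        _ = |Q i t - Q i s| * |astar i t - bstar i t| := abs_mul _ _
        _ ≤ B * W * B := mul_le_mul hd hx (abs_nonneg _) (by positivity)
    have hpart2 : ∑ t ∈ Finset.Ico s (s + W), Q i s * (astar i t - bstar i t) ≤ 0 := by
      rw [← Finset.mul_sum]
      apply mul_nonpos_of_nonneg_of_nonpos (hQnn i s)
      have hw := hwindow s ⟨k, by rw [hs]; ring⟩ hsT i
      rw [Finset.sum_sub_distrib]
      linarith
    have hcard : ∑ t ∈ Finset.Ico s (s + W), B * W * B = W * (B * W * B) := by
      have hww : s + W - s = W := by omega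
      rw [Finset.sum_const, Nat.card_Ico, hww, nsmul_eq_mul]
    calc _ ≤ W * (B * W * B) + 0 := by rw [← hcard]; exact add_le_add hpart1 hpart2
      _ = B^2 * W^2 := by ring
  -- decompose range T into windows
  have hdecomp : ∀ (f : ℕ → ℝ) (n : ℕ), ∑ t ∈ Finset.range (n * W), f t
      = ∑ k ∈ Finset.range n, ∑ t ∈ Finset.Ico (k*W) (k*W + W), f t := by
    intro f n
    induction n with
    | zero => simp
    | succ n ih =>
      rw [Finset.sum_range_succ, ← ih]
      have : (n+1) * W = n * W + W := by ring
      rw [this, Finset.range_eq_Ico, ← Finset.sum_Ico_consecutive f (Nat.zero_le _) (Nat.le_add_right _ _),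
        ← Finset.range_eq_Ico]
  -- sum of window bounds
  have hstarsum : ∑ t ∈ Finset.range T, ∑ i, Q i t * (astar i t - bstar i t)
      ≤ N * (B^2 * W^2) * m := by
    have hTm : T = m * W := by rw [hm]; ring
    rw [hTm, hdecomp _ m]
    calc ∑ k ∈ Finset.range m, ∑ t ∈ Finset.Ico (k*W) (k*W + W), ∑ i, Q i t * (astar i t - bstar i t)
        = ∑ k ∈ Finset.range m, ∑ i : Fin N, ∑ t ∈ Finset.Ico (k*W) (k*W + W), Q i t * (astar i t - bstar i t) := by
          exact Finset.sum_congr rfl fun k _ => Finset.sum_comm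
      _ ≤ ∑ k ∈ Finset.range m, ∑ i : Fin N, B^2 * W^2 := by
          apply Finset.sum_le_sum; intro k hk
          apply Finset.sum_le_sum; intro i _
          exact hwin k (Finset.mem_range.mp hk) i
      _ = N * (B^2 * W^2) * m := by
          simp [Finset.sum_const, Finset.card_univ]; ring
  -- combine via DPP
  have hmain : V * ((∑ t ∈ Finset.range T, Ustar t) - ∑ t ∈ Finset.range T, U t)
      ≤ T * (N * B^2) / 2 + N * (B^2 * W^2) * m := by
    have h1 : ∀ t ∈ Finset.range T,
        V * Ustar t - V * U t
          ≤ (∑ i, Q i t * (b i t - a i t)) + ∑ i, Q i t * (astar i t - bstar i t) := by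
      intro t ht
      have hd := hDPP t (Finset.mem_range.mp ht)
      have heq : ∑ i, Q i t * (astar i t - bstar i t) = - ∑ i, Q i t * (bstar i t - astar i t) := by
        rw [← Finset.sum_neg_distrib]
        exact Finset.sum_congr rfl fun i _ => by ring
      rw [heq]; linarith
    calc V * ((∑ t ∈ Finset.range T, Ustar t) - ∑ t ∈ Finset.range T, U t)
        = ∑ t ∈ Finset.range T, (V * Ustar t - V * U t) := by
          rw [Finset.sum_sub_distrib, ← Finset.mul_sum, ← Finset.mul_sum]; ring
      _ ≤ ∑ t ∈ Finset.range T, ((∑ i, Q i t * (b i t - a i t)) + ∑ i, Q i t * (astar i t - bstar i t)) :=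
          Finset.sum_le_sum h1
      _ = (∑ t ∈ Finset.range T, ∑ i, Q i t * (b i t - a i t))
            + ∑ t ∈ Finset.range T, ∑ i, Q i t * (astar i t - bstar i t) := Finset.sum_add_distrib
      _ ≤ T * (N * B^2) / 2 + N * (B^2 * W^2) * m := add_le_add hdriftsum hstarsum
  -- final arithmetic
  have hWm : (W:ℝ) * m = T := by exact_mod_cast hm.symm
  have hN1 : (1:ℝ) ≤ N := by exact_mod_cast hN
  have hW1 : (1:ℝ) ≤ W := by exact_mod_cast hW
  have hT1 : (1:ℝ) ≤ T := by exact_mod_cast hT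
  have hmle : N * (B^2 * W^2) * m = N * B^2 * W * T := by
    rw [← hWm]; ring
  have hhalf : (T:ℝ) * (N * B^2) / 2 ≤ N * B^2 * W * T / 2 := by
    nlinarith [sq_nonneg B, mul_nonneg (mul_nonneg (by positivity : (0:ℝ) ≤ (N:ℝ) * B^2) (by positivity : (0:ℝ) ≤ (T:ℝ))) (sub_nonneg.mpr hW1)]
  have hnn : (0:ℝ) ≤ N * B^2 * W * T := by positivity
  calc (∑ t ∈ Finset.range T, Ustar t) - ∑ t ∈ Finset.range T, U t
      = (V * ((∑ t ∈ Finset.range T, Ustar t) - ∑ t ∈ Finset.range T, U t)) / V := by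
        field_simp
    _ ≤ (T * (N * B^2) / 2 + N * (B^2 * W^2) * m) / V := by gcongr
    _ ≤ 7 * N * B^2 * W * T / V := by
        gcongr
        rw [hmle]; linarith
end

section
/- Let T ∈ ℕ be even and positive. For every causal policy π in the two-link adversarial network model over horizon T, there exists a network-event sequence ω such that: (i) some feasible action sequence for ω has total utility Σ_{t=0}^{T−1}(a₁(t) + a₂(t)) = 2T and final queues Q₁(T) = Q₂(T) = 0, while every feasible action sequence for ω has total utility at most 2T; and (ii) letting (a^π, b^π, Q^π) be the actions and queues produced by π on ω, (2T − Σ_{t=0}^{T−1}(a₁^π(t) + a₂^π(t))) + Q₁^π(T) + Q₂^π(T) ≥ T/2. Consequently, under the throughput utility, either the utility regret of π or its total final queue length is at least T/4, i.e., Ω(T). -/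
open Finset

/-- A network-event sequence in the two-link adversarial model: each slot `t` has
nonnegative arrival capacities `A i t` and channel rates `S i t` for links `i = 0, 1`. -/
structure EventSeq where
  A : Fin 2 → ℕ → ℝ
  S : Fin 2 → ℕ → ℝ
  hA : ∀ i t, 0 ≤ A i t
  hS : ∀ i t, 0 ≤ S i t

/-- An action sequence: admissions `a i t` and services `b i t` for each link and slot. -/
structure ActionSeq where
  a : Fin 2 → ℕ → ℝ
  b : Fin 2 → ℕ → ℝ

/-- Feasibility of an action sequence for an event sequence over horizon `T`:
admissions respect arrival capacities, services respect channel rates, and at most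
one link is served in each slot. -/
def Feasible (T : ℕ) (ω : EventSeq) (α : ActionSeq) : Prop :=
  ∀ t < T, (∀ i, 0 ≤ α.a i t ∧ α.a i t ≤ ω.A i t ∧ 0 ≤ α.b i t ∧ α.b i t ≤ ω.S i t) ∧
    (α.b 0 t = 0 ∨ α.b 1 t = 0)

/-- Queue lengths generated by an action sequence: `Q i 0 = 0` and
`Q i (t+1) = max (Q i t + a i t − b i t) 0`. -/
def queue (α : ActionSeq) (i : Fin 2) : ℕ → ℝ
  | 0 => 0
  | t + 1 => max (queue α i t + α.a i t - α.b i t) 0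

/-- A policy is causal if whenever two event sequences agree on slots `0, …, t`,
the assigned actions agree on slot `t`. -/
def Causal (π : EventSeq → ActionSeq) : Prop :=
  ∀ ω ω' : EventSeq, ∀ t : ℕ,
    (∀ s ≤ t, ∀ i, ω.A i s = ω'.A i s ∧ ω.S i s = ω'.S i s) →
    ∀ i, (π ω).a i t = (π ω').a i t ∧ (π ω).b i t = (π ω').b i t

/-! The adversary offers both links arrivals and rate `2` during the first `H = T/2` slots;
afterwards arrivals stop and the channel of one link `j` shuts down for good. Before time `H`
a causal policy cannot tell which `j` it faces, so the adversary takes `j` to be the link with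
the larger backlog at time `H`. If the policy admitted `u` packets by then, at most `2H` were
served, so that backlog is at least `(u - 2H)/2`, and it is stuck until the end; together with
the regret `4H - u ≥ 0` this costs at least `3H - u/2 ≥ H`. An oracle that knows `j` serves it
during the first half and drains the other link during the second half. -/

def throughput (α : ActionSeq) (T : ℕ) : ℝ :=
  ∑ t ∈ range T, (α.a 0 t + α.a 1 t)

lemma queue_nonneg_s8 (α : ActionSeq) (i : Fin 2) : ∀ t, 0 ≤ queue α i t
  | 0 => le_rfl
  | _ + 1 => le_max_right _ _

lemma sum_sub_le_queue (α : ActionSeq) (i : Fin 2) (n : ℕ) :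
    ∑ t ∈ range n, (α.a i t - α.b i t) ≤ queue α i n := by
  induction n with
  | zero => simp [queue]
  | succ n ih =>
    rw [sum_range_succ, queue]
    linarith [le_max_left (queue α i n + α.a i n - α.b i n) 0]

lemma throughput_sub_sum_service_le_queue (α : ActionSeq) (n : ℕ) :
    throughput α n - ∑ t ∈ range n, (α.b 0 t + α.b 1 t) ≤ queue α 0 n + queue α 1 n := by
  have h0 := sum_sub_le_queue α 0 n
  have h1 := sum_sub_le_queue α 1 n
  simp only [throughput, sum_sub_distrib, sum_add_distrib] at *
  linarith

lemma queue_congr {α α' : ActionSeq} {i : Fin 2} {n : ℕ}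
    (h : ∀ t < n, α.a i t = α'.a i t ∧ α.b i t = α'.b i t) : queue α i n = queue α' i n := by
  induction n with
  | zero => rfl
  | succ n ih =>
    obtain ⟨ha, hb⟩ := h n n.lt_succ_self
    rw [queue, queue, ih fun t ht => h t (ht.trans n.lt_succ_self), ha, hb]

/-- Only the endpoint needs to be nonnegative: the start is, and in between the queue moves
linearly, so it is never clipped. -/
lemma queue_add_of_forall_sub_eq {α : ActionSeq} {i : Fin 2} {m k : ℕ} {d : ℝ}
    (hd : ∀ s < k, α.a i (m + s) - α.b i (m + s) = d) (hk : 0 ≤ queue α i m + k * d) :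
    queue α i (m + k) = queue α i m + k * d := by
  induction k with
  | zero => simp
  | succ k ih =>
    have hq := queue_nonneg_s8 α i m
    push_cast at hk
    have hk' : 0 ≤ queue α i m + k * d := by
      rcases le_total 0 d with h | h
      · nlinarith [mul_nonneg k.cast_nonneg h]
      · linarith
    rw [← add_assoc, queue, ih (fun s hs => hd s (hs.trans k.lt_succ_self)) hk', add_sub_assoc,
      hd k k.lt_succ_self, max_eq_left (by linarith)]
    push_cast
    ring

namespace Feasible

variable {T : ℕ} {ω : EventSeq} {α : ActionSeq}

lemma mono (h : Feasible T ω α) {n : ℕ} (hn : n ≤ T) : Feasible n ω α :=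
  fun t ht => h t (ht.trans_le hn)

lemma admission_eq_zero (h : Feasible T ω α) {i : Fin 2} {t : ℕ} (ht : t < T)
    (hA : ω.A i t = 0) : α.a i t = 0 := by
  obtain ⟨h0, h1, -, -⟩ := (h t ht).1 i
  linarith

lemma service_eq_zero (h : Feasible T ω α) {i : Fin 2} {t : ℕ} (ht : t < T)
    (hS : ω.S i t = 0) : α.b i t = 0 := by
  obtain ⟨-, -, h0, h1⟩ := (h t ht).1 i
  linarith

lemma throughput_le (h : Feasible T ω α) :
    throughput α T ≤ ∑ t ∈ range T, (ω.A 0 t + ω.A 1 t) :=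
  sum_le_sum fun t ht =>
    add_le_add ((h t (mem_range.1 ht)).1 0).2.1 ((h t (mem_range.1 ht)).1 1).2.1

lemma sum_service_le (h : Feasible T ω α) :
    ∑ t ∈ range T, (α.b 0 t + α.b 1 t) ≤ ∑ t ∈ range T, max (ω.S 0 t) (ω.S 1 t) := by
  refine sum_le_sum fun t ht => ?_
  obtain ⟨hb, hone⟩ := h t (mem_range.1 ht)
  obtain ⟨-, -, -, h0⟩ := hb 0
  obtain ⟨-, -, -, h1⟩ := hb 1
  rcases hone with h | h <;> rw [h] <;> simp [h0, h1]

end Feasible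

lemma Causal.queue_eq {π : EventSeq → ActionSeq} (hπ : Causal π) {ω ω' : EventSeq} {n : ℕ}
    (h : ∀ s < n, ∀ i, ω.A i s = ω'.A i s ∧ ω.S i s = ω'.S i s) (i : Fin 2) :
    queue (π ω) i n = queue (π ω') i n :=
  queue_congr fun t ht => hπ ω ω' t (fun s hs => h s (hs.trans_lt ht)) i

def advEvent (H : ℕ) (j : Fin 2) : EventSeq where
  A _ t := if t < H then 2 else 0
  S i t := if t < H ∨ i ≠ j then 2 else 0
  hA _ t := by split <;> norm_num
  hS i t := by split <;> norm_num

def oracleAction (H : ℕ) (j : Fin 2) : ActionSeq where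
  a := (advEvent H j).A
  b i t := if (t < H ↔ i = j) then 2 else 0

lemma advEvent_agree (H : ℕ) (j j' : Fin 2) :
    ∀ s < H, ∀ i, (advEvent H j).A i s = (advEvent H j').A i s ∧
      (advEvent H j).S i s = (advEvent H j').S i s := by
  intro s hs i
  simp [advEvent, hs]

section advEvent

variable {H : ℕ} {j : Fin 2}

lemma sum_arrivals_advEvent :
    ∑ t ∈ range (H + H), ((advEvent H j).A 0 t + (advEvent H j).A 1 t) = 4 * H := by
  have first_half (t) (ht : t ∈ range H) :
      (advEvent H j).A 0 t + (advEvent H j).A 1 t = 4 := by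
    simp only [advEvent, if_pos (mem_range.1 ht)]; norm_num
  rw [sum_range_add, sum_congr rfl first_half]
  simp [advEvent, mul_comm]

lemma sum_max_rate_advEvent :
    ∑ t ∈ range H, max ((advEvent H j).S 0 t) ((advEvent H j).S 1 t) = 2 * H := by
  rw [sum_congr rfl fun t ht => show _ = (2 : ℝ) by simp [advEvent, mem_range.1 ht]]
  simp [mul_comm]

end advEvent

lemma feasible_oracleAction (T H : ℕ) (j : Fin 2) :
    Feasible T (advEvent H j) (oracleAction H j) := by
  intro t _
  refine ⟨fun i => ?_, ?_⟩
  · simp only [oracleAction, advEvent]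
    refine ⟨?_, le_rfl, ?_, ?_⟩ <;> split_ifs <;> simp_all
  · fin_cases j <;> by_cases ht : t < H <;> simp [oracleAction, ht]

lemma queue_oracleAction (H : ℕ) (j i : Fin 2) : queue (oracleAction H j) i (H + H) = 0 := by
  by_cases hij : i = j
  · subst hij
    have := queue_add_of_forall_sub_eq (α := oracleAction H i) (i := i) (m := 0) (k := H + H)
      (d := 0)
      (fun s _ => by by_cases hs : s < H <;> simp [oracleAction, advEvent, hs])
      (by simp [queue])
    simpa [queue] using this
  · have first_half : queue (oracleAction H j) i H = 2 * H := by
      have := queue_add_of_forall_sub_eq (α := oracleAction H j) (i := i) (m := 0) (k := H)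
        (d := 2) (fun s hs => by simp [oracleAction, advEvent, hs, hij]) (by simp [queue])
      simpa [queue, mul_comm] using this
    have := queue_add_of_forall_sub_eq (α := oracleAction H j) (i := i) (m := H) (k := H)
      (d := -2) (fun s hs => by simp [oracleAction, advEvent, hij]) (by rw [first_half]; linarith)
    rw [this, first_half]
    ring

section feasible_advEvent

variable {H : ℕ} {j : Fin 2} {α : ActionSeq}

lemma throughput_eq_of_feasible_advEvent (h : Feasible (H + H) (advEvent H j) α) :
    throughput α (H + H) = throughput α H := by
  have second_half (i : Fin 2) (s : ℕ) (hs : s ∈ range H) : α.a i (H + s) = 0 :=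
    h.admission_eq_zero (by rw [mem_range] at hs; omega) (by simp [advEvent])
  rw [throughput, throughput, sum_range_add, add_eq_left]
  exact sum_eq_zero fun s hs => by rw [second_half 0 s hs, second_half 1 s hs, add_zero]

lemma queue_eq_of_feasible_advEvent (h : Feasible (H + H) (advEvent H j) α) :
    queue α j (H + H) = queue α j H := by
  have frozen := queue_add_of_forall_sub_eq (α := α) (i := j) (m := H) (k := H) (d := 0)
    (fun s hs => by
      rw [h.admission_eq_zero (by omega) (by simp [advEvent]),
        h.service_eq_zero (by omega) (by simp [advEvent]), sub_zero])
    (by simpa using queue_nonneg_s8 α j H)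
  simpa using frozen

lemma throughput_le_of_feasible_advEvent (h : Feasible (H + H) (advEvent H j) α) :
    throughput α (H + H) ≤ 4 * H :=
  sum_arrivals_advEvent (j := j) ▸ h.throughput_le

lemma throughput_sub_le_queue_of_feasible_advEvent (h : Feasible (H + H) (advEvent H j) α) :
    throughput α H - 2 * H ≤ queue α 0 H + queue α 1 H := by
  have served := (h.mono (Nat.le_add_right H H)).sum_service_le
  rw [sum_max_rate_advEvent] at served
  linarith [throughput_sub_sum_service_le_queue α H]

lemma le_regret_add_queue_of_feasible_advEvent (h : Feasible (H + H) (advEvent H j) α)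
    (hj : queue α 0 H + queue α 1 H ≤ 2 * queue α j H) :
    (H : ℝ) ≤ 4 * H - throughput α (H + H) + queue α 0 (H + H) + queue α 1 (H + H) := by
  have admitted := throughput_le_of_feasible_advEvent h
  have backlog := throughput_sub_le_queue_of_feasible_advEvent h
  rw [throughput_eq_of_feasible_advEvent h] at admitted ⊢
  have stuck : queue α j H ≤ queue α 0 (H + H) + queue α 1 (H + H) := by
    rw [← queue_eq_of_feasible_advEvent h]
    fin_cases j <;> simp [queue_nonneg_s8]
  linarith

end feasible_advEvent

theorem impossibility_unconstrained_general (T : ℕ) (hTeven : Even T)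
    (π : EventSeq → ActionSeq)
    (hfeas : ∀ ω, Feasible T ω (π ω)) (hcausal : Causal π) :
    ∃ ω : EventSeq,
      ((∃ α, Feasible T ω α ∧
          (∑ t ∈ Finset.range T, (α.a 0 t + α.a 1 t)) = 2 * (T : ℝ) ∧
          queue α 0 T = 0 ∧ queue α 1 T = 0) ∧
        (∀ α, Feasible T ω α →
          (∑ t ∈ Finset.range T, (α.a 0 t + α.a 1 t)) ≤ 2 * (T : ℝ))) ∧
      ((2 * (T : ℝ) - ∑ t ∈ Finset.range T, ((π ω).a 0 t + (π ω).a 1 t))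
          + queue (π ω) 0 T + queue (π ω) 1 T ≥ (T : ℝ) / 2) ∧
      ((2 * (T : ℝ) - ∑ t ∈ Finset.range T, ((π ω).a 0 t + (π ω).a 1 t)) ≥ (T : ℝ) / 4 ∨
        queue (π ω) 0 T + queue (π ω) 1 T ≥ (T : ℝ) / 4) := by
  obtain ⟨H, rfl⟩ := hTeven
  set p := π (advEvent H 0)
  obtain ⟨j, hj⟩ : ∃ j : Fin 2, queue p 0 H + queue p 1 H ≤ 2 * queue p j H := by
    rcases le_total (queue p 1 H) (queue p 0 H) with h | h
    exacts [⟨0, by linarith⟩, ⟨1, by linarith⟩]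
  have same_backlog (i : Fin 2) : queue (π (advEvent H j)) i H = queue p i H :=
    hcausal.queue_eq (advEvent_agree H j 0) i
  have loss := le_regret_add_queue_of_feasible_advEvent (hfeas (advEvent H j))
    (by rwa [same_backlog, same_backlog, same_backlog])
  rw [throughput] at loss
  push_cast
  refine ⟨advEvent H j, ⟨⟨oracleAction H j, feasible_oracleAction _ H j, ?_,
    queue_oracleAction H j 0, queue_oracleAction H j 1⟩, fun α hα => ?_⟩, by linarith, ?_⟩
  · exact (sum_arrivals_advEvent (j := j)).trans (by ring)
  · have admitted := throughput_le_of_feasible_advEvent hα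
    rw [throughput] at admitted
    linarith
  · by_contra! small
    linarith [small.1, small.2]

/-- Theorem 1 (impossibility for an unconstrained adversary): for every causal policy
in the two-link adversarial model with throughput utility, there is an event sequence
on which an oracle achieves total utility `2T` with empty final queues, yet the sum of
the policy's utility regret and final total queue length is at least `T/2`; hence the
regret or the total final queue length is at least `T/4 = Ω(T)`. -/
theorem impossibility_unconstrained (T : ℕ) (hT : 0 < T) (hTeven : Even T)
    (π : EventSeq → ActionSeq)
    (hfeas : ∀ ω, Feasible T ω (π ω)) (hcausal : Causal π) :
    ∃ ω : EventSeq,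
      ((∃ α, Feasible T ω α ∧
          (∑ t ∈ Finset.range T, (α.a 0 t + α.a 1 t)) = 2 * (T : ℝ) ∧
          queue α 0 T = 0 ∧ queue α 1 T = 0) ∧
        (∀ α, Feasible T ω α →
          (∑ t ∈ Finset.range T, (α.a 0 t + α.a 1 t)) ≤ 2 * (T : ℝ))) ∧
      ((2 * (T : ℝ) - ∑ t ∈ Finset.range T, ((π ω).a 0 t + (π ω).a 1 t))
          + queue (π ω) 0 T + queue (π ω) 1 T ≥ (T : ℝ) / 2) ∧
      ((2 * (T : ℝ) - ∑ t ∈ Finset.range T, ((π ω).a 0 t + (π ω).a 1 t)) ≥ (T : ℝ) / 4 ∨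
        queue (π ω) 0 T + queue (π ω) 1 T ≥ (T : ℝ) / 4) :=
  impossibility_unconstrained_general T hTeven π hfeas hcausal
end

section
/- Let N ≥ 1, B ≥ 0, V ≥ 0, V_T ≥ 0, W ≥ 1 and T ≥ 1 with W dividing T. For each i ∈ {1,…,N} let Q_i, a_i, b_i, a*_i, b*_i satisfy Q_i(0) = 0, Q_i(t+1) = max(Q_i(t) + a_i(t) − b_i(t), 0), and 0 ≤ a_i(t), b_i(t), a*_i(t), b*_i(t) ≤ B for t ∈ {0,…,T−1}. Let U, U* take values in [U_min, U_max], suppose the Drift-plus-Penalty property holds at every slot t < T (Σ_{i} Q_i(t)(b_i(t) − a_i(t)) + V·U(t) ≥ Σ_{i} Q_i(t)(b*_i(t) − a*_i(t)) + V·U*(t)), and suppose the comparator satisfies the V_T-window constraint Σ_{τ=t}^{t+W−1} (a*_i(τ) − b*_i(τ)) ≤ V_T for every i and every t that is a multiple of W with t + W ≤ T. Then the total final queue length satisfies Σ_{i=1}^N Q_i(T) ≤ 2·N·V_T·T/W + √( 2N ( V·T·(U_max − U_min) + 7·N·B²·W·T ) ). -/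
open Finset

lemma telescope_bound' (f g : ℕ → ℝ) : ∀ m n : ℕ, m ≤ n →
    (∀ t, m ≤ t → t < n → f (t + 1) ≤ f t + g t) →
    f n ≤ f m + ∑ t ∈ Finset.Ico m n, g t := by
  intro m n h
  induction n, h using Nat.le_induction with
  | base => simp
  | succ n hmn ih =>
    intro hstep
    have h1 : f n ≤ f m + ∑ t ∈ Finset.Ico m n, g t :=
      ih (fun t ht htn => hstep t ht (by omega))
    have h2 : f (n + 1) ≤ f n + g n := hstep n hmn (by omega)
    rw [Finset.sum_Ico_succ_top hmn]
    linarith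

lemma sqrt_recursion' (a C : ℝ) (ha : 0 ≤ a) (hC : 0 ≤ C) (x : ℕ → ℝ)
    (hx0 : x 0 = 0) (hxnn : ∀ k, 0 ≤ x k) (K : ℕ)
    (hrec : ∀ k < K, (x (k + 1)) ^ 2 ≤ (x k) ^ 2 + 2 * a * x k + C) :
    ∀ k ≤ K, x k ≤ 2 * a * (k : ℝ) + Real.sqrt ((k : ℝ) * C) := by
  intro k
  induction k with
  | zero => intro _; simp [hx0]
  | succ k ih =>
    intro hk
    have hkK : k < K := hk
    have hxk := ih (le_of_lt hkK)
    have h2 := hrec k hkK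
    set s := Real.sqrt ((k : ℝ) * C) with hs
    have hs0 : 0 ≤ s := Real.sqrt_nonneg _
    have hssq : s ^ 2 = (k : ℝ) * C := Real.sq_sqrt (by positivity)
    set s' := Real.sqrt (((k : ℕ) + 1 : ℝ) * C) with hs'
    have hs'0 : 0 ≤ s' := Real.sqrt_nonneg _
    have hs'sq : s' ^ 2 = ((k : ℝ) + 1) * C := Real.sq_sqrt (by positivity)
    have hss' : s ≤ s' := Real.sqrt_le_sqrt (by nlinarith)
    have hknn : (0 : ℝ) ≤ (k : ℝ) := Nat.cast_nonneg k
    have hbnn : 0 ≤ 2 * a * (k : ℝ) + s := by positivity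
    have h1 : (x k) ^ 2 + 2 * a * x k + C ≤
        (2 * a * (k : ℝ) + s) ^ 2 + 2 * a * (2 * a * (k : ℝ) + s) + C := by
      nlinarith [mul_nonneg (sub_nonneg.2 hxk) (add_nonneg hbnn (hxnn k)),
        mul_nonneg ha (sub_nonneg.2 hxk)]
    have h3 : (2 * a * (k : ℝ) + s) ^ 2 + 2 * a * (2 * a * (k : ℝ) + s) + C ≤
        (2 * a * ((k : ℝ) + 1) + s') ^ 2 := by
      nlinarith [mul_nonneg (mul_nonneg ha hknn) (sub_nonneg.2 hss'),
        mul_nonneg ha (sub_nonneg.2 hss'), mul_nonneg ha hs0,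
        mul_nonneg (mul_nonneg ha ha) hknn, sq_nonneg a]
    have hy : (x (k + 1)) ^ 2 ≤ (2 * a * ((k : ℝ) + 1) + s') ^ 2 := by linarith
    have h4 := Real.sqrt_le_sqrt hy
    rw [Real.sqrt_sq (hxnn _), Real.sqrt_sq (by positivity)] at h4
    push_cast
    convert h4 using 2

lemma hmain_aux (N W T : ℕ) (B V Umax Umin : ℝ)
    (hΔU : 0 ≤ Umax - Umin) (hWge1 : (1:ℝ) ≤ (W:ℝ)) :
    2 * (N:ℝ) ^ 2 * B ^ 2 * W * T + (N:ℝ) ^ 2 * B ^ 2 * T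
        + 2 * N * V * T * (Umax - Umin)
      ≤ 2 * (N : ℝ) * (V * (T : ℝ) * (Umax - Umin)
          + 7 * (N : ℝ) * B ^ 2 * (W : ℝ) * (T : ℝ)) := by
  have hbig : (0:ℝ) ≤ (N:ℝ) ^ 2 * B ^ 2 * (T:ℝ) := by positivity
  nlinarith [mul_nonneg hbig (sub_nonneg.2 hWge1), mul_nonneg hbig (le_trans zero_le_one hWge1)]

/-- Queue-length bound for the Drift-plus-Penalty algorithm under the
`V_T`-constrained adversary model (Theorem `thm:max-general`): the total final queue
length is at most `2N·V_T·T/W + √(2N(VT(U_max − U_min) + 7NB²WT))`. -/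
theorem DPP_queue_bound_VT_constrained (N : ℕ) (hN : 1 ≤ N) (B : ℝ) (hB : 0 ≤ B)
    (V : ℝ) (hV : 0 ≤ V) (VT : ℝ) (hVT : 0 ≤ VT)
    (W T : ℕ) (hW : 1 ≤ W) (hT : 1 ≤ T) (hWT : W ∣ T)
    (Q a b astar bstar : Fin N → ℕ → ℝ) (U Ustar : ℕ → ℝ) (Umin Umax : ℝ)
    (hQ0 : ∀ i, Q i 0 = 0)
    (hrec : ∀ i t, Q i (t + 1) = max (Q i t + a i t - b i t) 0)
    (hbnd : ∀ i, ∀ t < T, (0 ≤ a i t ∧ a i t ≤ B) ∧ (0 ≤ b i t ∧ b i t ≤ B) ∧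
      (0 ≤ astar i t ∧ astar i t ≤ B) ∧ (0 ≤ bstar i t ∧ bstar i t ≤ B))
    (hU : ∀ t < T, Umin ≤ U t ∧ U t ≤ Umax)
    (hUstar : ∀ t < T, Umin ≤ Ustar t ∧ Ustar t ≤ Umax)
    (hDPP : ∀ t < T, (∑ i, Q i t * (b i t - a i t)) + V * U t ≥
      (∑ i, Q i t * (bstar i t - astar i t)) + V * Ustar t)
    (hwindow : ∀ t : ℕ, W ∣ t → t + W ≤ T → ∀ i,
      (∑ τ ∈ Finset.Ico t (t + W), (astar i τ - bstar i τ)) ≤ VT) :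
    (∑ i, Q i T) ≤
      2 * (N : ℝ) * VT * (T : ℝ) / (W : ℝ) +
        Real.sqrt (2 * (N : ℝ) *
          (V * (T : ℝ) * (Umax - Umin) + 7 * (N : ℝ) * B ^ 2 * (W : ℝ) * (T : ℝ))) := by
  have hW0 : (0:ℝ) < (W:ℝ) := by exact_mod_cast hW
  have hWge1 : (1:ℝ) ≤ (W:ℝ) := by exact_mod_cast hW
  have hNpos : (0:ℝ) ≤ (N:ℝ) := Nat.cast_nonneg N
  have hTnn : (0:ℝ) ≤ (T:ℝ) := Nat.cast_nonneg T
  have hΔU : 0 ≤ Umax - Umin := by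
    obtain ⟨h1, h2⟩ := hU 0 hT
    linarith
  have hQnn : ∀ i t, 0 ≤ Q i t := by
    intro i t
    cases t with
    | zero => exact (hQ0 i).ge
    | succ t => rw [hrec]; exact le_max_right _ _
  -- Lipschitz property of queues
  have hlip : ∀ i t, t < T → |Q i (t + 1) - Q i t| ≤ B := by
    intro i t ht
    obtain ⟨⟨ha0, haB⟩, ⟨hb0, hbB⟩, _, _⟩ := hbnd i t ht
    have hq := hQnn i t
    rw [hrec]
    rcases le_or_gt 0 (Q i t + a i t - b i t) with h | h
    · rw [max_eq_left h, abs_le]; constructor <;> linarith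
    · rw [max_eq_right h.le, abs_le]; constructor <;> linarith
  have hdev : ∀ i s m, s + m ≤ T → |Q i (s + m) - Q i s| ≤ B * m := by
    intro i s m
    induction m with
    | zero => intro _; simp
    | succ m ih =>
      intro h
      have h1 := ih (by omega)
      have h2 := hlip i (s + m) (by omega)
      have e : Q i (s + (m + 1)) - Q i s
          = (Q i (s + m + 1) - Q i (s + m)) + (Q i (s + m) - Q i s) := by
        have : s + (m + 1) = (s + m) + 1 := by omega
        rw [this]; ring
      rw [e]
      calc |(Q i (s + m + 1) - Q i (s + m)) + (Q i (s + m) - Q i s)|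
          ≤ |Q i (s + m + 1) - Q i (s + m)| + |Q i (s + m) - Q i s| := abs_add_le _ _
        _ ≤ B + B * m := add_le_add h2 h1
        _ = B * (m + 1 : ℕ) := by push_cast; ring
  set L : ℕ → ℝ := fun t => ∑ i, Q i t ^ 2 with hL
  have hLnn : ∀ t, 0 ≤ L t := fun t => Finset.sum_nonneg fun i _ => sq_nonneg _
  -- per-slot drift bound
  have hstep : ∀ t, t < T → L (t + 1) ≤ L t
      + (2 * (∑ i, Q i t * (astar i t - bstar i t)) + 2 * V * (Umax - Umin) + N * B ^ 2) := by
    intro t ht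
    have hsq : ∀ i, Q i (t + 1) ^ 2 ≤ Q i t ^ 2 + 2 * (Q i t * (a i t - b i t)) + B ^ 2 := by
      intro i
      obtain ⟨⟨ha0, haB⟩, ⟨hb0, hbB⟩, _, _⟩ := hbnd i t ht
      have hq := hQnn i t
      rw [hrec]
      rcases le_or_gt 0 (Q i t + a i t - b i t) with h | h
      · rw [max_eq_left h]; nlinarith
      · rw [max_eq_right h.le]; nlinarith
    have hsum : L (t + 1) ≤ L t + 2 * (∑ i, Q i t * (a i t - b i t)) + N * B ^ 2 := by
      calc L (t + 1) ≤ ∑ i, (Q i t ^ 2 + 2 * (Q i t * (a i t - b i t)) + B ^ 2) :=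
            Finset.sum_le_sum fun i _ => hsq i
        _ = L t + 2 * (∑ i, Q i t * (a i t - b i t)) + N * B ^ 2 := by
            rw [Finset.sum_add_distrib, Finset.sum_add_distrib, ← Finset.mul_sum,
              Finset.sum_const, Finset.card_univ, Fintype.card_fin, nsmul_eq_mul]
    have e1 : (∑ i, Q i t * (a i t - b i t)) = -∑ i, Q i t * (b i t - a i t) := by
      rw [← Finset.sum_neg_distrib]; exact Finset.sum_congr rfl fun i _ => by ring
    have e2 : (∑ i, Q i t * (astar i t - bstar i t))
        = -∑ i, Q i t * (bstar i t - astar i t) := by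
      rw [← Finset.sum_neg_distrib]; exact Finset.sum_congr rfl fun i _ => by ring
    have hUt := hU t ht
    have hUs := hUstar t ht
    have hd := hDPP t ht
    have hm1 : V * U t ≤ V * Umax := mul_le_mul_of_nonneg_left hUt.2 hV
    have hm2 : V * Umin ≤ V * Ustar t := mul_le_mul_of_nonneg_left hUs.1 hV
    have hmr : V * (Umax - Umin) = V * Umax - V * Umin := by ring
    have key : (∑ i, Q i t * (a i t - b i t))
        ≤ (∑ i, Q i t * (astar i t - bstar i t)) + V * (Umax - Umin) := by
      rw [e1, e2]; linarith
    linarith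
  set C0 : ℝ := 2 * N * B ^ 2 * W ^ 2 + N * B ^ 2 * W + 2 * V * W * (Umax - Umin) with hC0def
  have hC0 : 0 ≤ C0 := by
    have h1 : 0 ≤ 2 * V * (W:ℝ) * (Umax - Umin) := mul_nonneg (by positivity) hΔU
    have h2 : (0:ℝ) ≤ 2 * N * B ^ 2 * W ^ 2 + N * B ^ 2 * W := by positivity
    rw [hC0def]; linarith
  -- per-window bound
  have hwin : ∀ k : ℕ, (k + 1) * W ≤ T →
      L ((k + 1) * W) ≤ L (k * W) + 2 * VT * (∑ i, Q i (k * W)) + C0 := by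
    intro k hk
    have hmn : k * W ≤ (k + 1) * W := Nat.mul_le_mul_right _ (by omega)
    have hkW : k * W + W = (k + 1) * W := by ring
    have htel := telescope_bound' L
      (fun t => 2 * (∑ i, Q i t * (astar i t - bstar i t)) + 2 * V * (Umax - Umin) + N * B ^ 2)
      (k * W) ((k + 1) * W) hmn
      (fun t ht1 ht2 => hstep t (lt_of_lt_of_le ht2 hk))
    have hcard : ((k + 1) * W - k * W) = W := by
      have : (k + 1) * W = k * W + W := by ring
      omega
    have hsum1 : (∑ t ∈ Finset.Ico (k * W) ((k + 1) * W),
          (2 * (∑ i, Q i t * (astar i t - bstar i t)) + 2 * V * (Umax - Umin) + N * B ^ 2))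
        = 2 * (∑ t ∈ Finset.Ico (k * W) ((k + 1) * W), ∑ i, Q i t * (astar i t - bstar i t))
          + (W : ℝ) * (2 * V * (Umax - Umin) + N * B ^ 2) := by
      rw [Finset.sum_add_distrib, Finset.sum_add_distrib, ← Finset.mul_sum,
        Finset.sum_const, Finset.sum_const, Nat.card_Ico, hcard, nsmul_eq_mul, nsmul_eq_mul]
      ring
    have hinner : (∑ t ∈ Finset.Ico (k * W) ((k + 1) * W), ∑ i, Q i t * (astar i t - bstar i t))
        ≤ VT * (∑ i, Q i (k * W)) + N * (B ^ 2 * W ^ 2) := by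
      rw [Finset.sum_comm]
      have hper : ∀ i ∈ Finset.univ, (∑ t ∈ Finset.Ico (k * W) ((k + 1) * W),
          Q i t * (astar i t - bstar i t)) ≤ Q i (k * W) * VT + B ^ 2 * W ^ 2 := by
        intro i _
        have hwi := hwindow (k * W) ⟨k, by ring⟩ (by omega) i
        rw [hkW] at hwi
        have hsplit : ∀ t ∈ Finset.Ico (k * W) ((k + 1) * W),
            Q i t * (astar i t - bstar i t)
            = Q i (k * W) * (astar i t - bstar i t)
              + (Q i t - Q i (k * W)) * (astar i t - bstar i t) := fun t _ => by ring
        rw [Finset.sum_congr rfl hsplit, Finset.sum_add_distrib, ← Finset.mul_sum]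
        have h1 : Q i (k * W) * (∑ t ∈ Finset.Ico (k * W) ((k + 1) * W),
            (astar i t - bstar i t)) ≤ Q i (k * W) * VT :=
          mul_le_mul_of_nonneg_left hwi (hQnn i _)
        have h2 : (∑ t ∈ Finset.Ico (k * W) ((k + 1) * W),
            (Q i t - Q i (k * W)) * (astar i t - bstar i t))
            ≤ ∑ _t ∈ Finset.Ico (k * W) ((k + 1) * W), (B * W) * B := by
          apply Finset.sum_le_sum
          intro t ht
          rw [Finset.mem_Ico] at ht
          have htT : t < T := lt_of_lt_of_le ht.2 hk
          obtain ⟨_, _, ⟨hsa0, hsaB⟩, ⟨hsb0, hsbB⟩⟩ := hbnd i t htT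
          have hmW : t - k * W ≤ W := by omega
          have hme : k * W + (t - k * W) = t := by omega
          have hd1' := hdev i (k * W) (t - k * W) (by omega)
          rw [hme] at hd1'
          have hd1 : |Q i t - Q i (k * W)| ≤ B * W := by
            refine le_trans hd1' ?_
            have : ((t - k * W : ℕ) : ℝ) ≤ (W : ℝ) := by exact_mod_cast hmW
            exact mul_le_mul_of_nonneg_left this hB
          have hd2 : |astar i t - bstar i t| ≤ B := by
            rw [abs_le]; constructor <;> linarith
          calc (Q i t - Q i (k * W)) * (astar i t - bstar i t)
              ≤ |(Q i t - Q i (k * W)) * (astar i t - bstar i t)| := le_abs_self _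
            _ = |Q i t - Q i (k * W)| * |astar i t - bstar i t| := abs_mul _ _
            _ ≤ (B * W) * B :=
                mul_le_mul hd1 hd2 (abs_nonneg _) (by positivity)
        rw [Finset.sum_const, Nat.card_Ico, hcard, nsmul_eq_mul] at h2
        have : (W : ℝ) * (B * W * B) = B ^ 2 * W ^ 2 := by ring
        linarith
      calc (∑ i, ∑ t ∈ Finset.Ico (k * W) ((k + 1) * W), Q i t * (astar i t - bstar i t))
          ≤ ∑ i : Fin N, (Q i (k * W) * VT + B ^ 2 * W ^ 2) := Finset.sum_le_sum hper
        _ = VT * (∑ i, Q i (k * W)) + N * (B ^ 2 * W ^ 2) := by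
            rw [Finset.sum_add_distrib, ← Finset.sum_mul, Finset.sum_const,
              Finset.card_univ, Fintype.card_fin, nsmul_eq_mul]
            ring
    rw [hsum1] at htel
    rw [hC0def]
    linarith
  -- Cauchy-Schwarz
  have hCS : ∀ t, (∑ i, Q i t) ≤ Real.sqrt N * Real.sqrt (L t) := by
    intro t
    have h1 : (∑ i, Q i t) ^ 2 ≤ (N : ℝ) * L t := by
      have := sq_sum_le_card_mul_sum_sq (s := Finset.univ) (f := fun i => Q i t)
      simpa [Finset.card_univ] using this
    have h2 : (∑ i, Q i t) = Real.sqrt ((∑ i, Q i t) ^ 2) :=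
      (Real.sqrt_sq (Finset.sum_nonneg fun i _ => hQnn i t)).symm
    rw [h2, ← Real.sqrt_mul hNpos]
    exact Real.sqrt_le_sqrt h1
  set K := T / W with hKdef
  have hKW : K * W = T := Nat.div_mul_cancel hWT
  clear_value L C0 K
  -- apply the recursion
  have hx := sqrt_recursion' (VT * Real.sqrt N) C0 (by positivity) hC0
    (fun k => Real.sqrt (L (k * W)))
    (by simp [hL, hQ0])
    (fun k => Real.sqrt_nonneg _) K
    (by
      intro k hk
      have hk1 : (k + 1) * W ≤ T := by
        rw [← hKW]; exact Nat.mul_le_mul_right W (by omega)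
      have h1 := hwin k hk1
      have h2 := hCS (k * W)
      have hsq1 : Real.sqrt (L ((k + 1) * W)) ^ 2 = L ((k + 1) * W) := Real.sq_sqrt (hLnn _)
      have hsq2 : Real.sqrt (L (k * W)) ^ 2 = L (k * W) := Real.sq_sqrt (hLnn _)
      rw [hsq1, hsq2]
      have h3 : VT * (∑ i, Q i (k * W)) ≤ VT * (Real.sqrt N * Real.sqrt (L (k * W))) :=
        mul_le_mul_of_nonneg_left h2 hVT
      nlinarith)
    K le_rfl
  replace hx : Real.sqrt (L (K * W)) ≤ 2 * (VT * Real.sqrt N) * (K : ℝ) + Real.sqrt ((K : ℝ) * C0) := hx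
  rw [hKW] at hx
  have h7 : (∑ i, Q i T) ≤ Real.sqrt N *
      (2 * (VT * Real.sqrt N) * (K : ℝ) + Real.sqrt ((K : ℝ) * C0)) :=
    le_trans (hCS T) (mul_le_mul_of_nonneg_left hx (Real.sqrt_nonneg _))
  have hNN : Real.sqrt N * Real.sqrt N = (N : ℝ) := Real.mul_self_sqrt hNpos
  have h8 : Real.sqrt N * (2 * (VT * Real.sqrt N) * (K : ℝ) + Real.sqrt ((K : ℝ) * C0))
      = 2 * (N : ℝ) * VT * (K : ℝ) + Real.sqrt ((N : ℝ) * ((K : ℝ) * C0)) := by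
    rw [mul_add, Real.sqrt_mul hNpos ((K : ℝ) * C0)]
    have : Real.sqrt N * (2 * (VT * Real.sqrt N) * (K : ℝ))
        = 2 * VT * (K : ℝ) * (Real.sqrt N * Real.sqrt N) := by ring
    rw [this, hNN]; ring
  have hKWr : (K : ℝ) * (W : ℝ) = (T : ℝ) := by exact_mod_cast congrArg Nat.cast hKW
  have hKr : (K : ℝ) = (T : ℝ) / (W : ℝ) := by
    rw [eq_div_iff (ne_of_gt hW0)]; exact hKWr
  have hmain : (N : ℝ) * ((K : ℝ) * C0)
      ≤ 2 * (N : ℝ) * (V * (T : ℝ) * (Umax - Umin) + 7 * (N : ℝ) * B ^ 2 * (W : ℝ) * (T : ℝ)) := by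
    have e : (N : ℝ) * ((K : ℝ) * C0)
        = 2 * (N:ℝ) ^ 2 * B ^ 2 * W * ((K : ℝ) * W) + (N:ℝ) ^ 2 * B ^ 2 * ((K : ℝ) * W)
          + 2 * N * V * ((K : ℝ) * W) * (Umax - Umin) := by
      rw [hC0def]; ring
    rw [hKWr] at e
    rw [e]
    exact hmain_aux N W T B V Umax Umin hΔU hWge1
  have hsqle : Real.sqrt ((N : ℝ) * ((K : ℝ) * C0))
      ≤ Real.sqrt (2 * (N : ℝ) *
        (V * (T : ℝ) * (Umax - Umin) + 7 * (N : ℝ) * B ^ 2 * (W : ℝ) * (T : ℝ))) :=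
    Real.sqrt_le_sqrt hmain
  rw [h8] at h7
  have hfirst : 2 * (N : ℝ) * VT * (K : ℝ) = 2 * (N : ℝ) * VT * (T : ℝ) / (W : ℝ) := by
    rw [hKr]; ring
  linarith
end
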